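/- arXiv:1509.02084 — 3 statements merged into one kernel-verified Lean document; each statement's English description precedes it below -/
import Mathlib

section
/- Let (m, R_l, R_r) be a tour and K(m) its core. If θ₁ ∈ ℝ and z is a point of the topological boundary of K(m) with z ∈ D(θ₁), then z = m(θ₁). -/
open MeasureTheory Set Filter
open scoped RealInnerProductSpace Topology

/-- The unit vector of direction θ. -/
noncomputable def uvec (θ : ℝ) : EuclideanSpace ℝ (Fin 2) := WithLp.toLp 2 ![Real.cos θ, Real.sin θ]

/-- The unit vector orthogonal to `uvec θ` (rotation of `uvec θ` by +π/2). -/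
noncomputable def uperp (θ : ℝ) : EuclideanSpace ℝ (Fin 2) := WithLp.toLp 2 ![-Real.sin θ, Real.cos θ]

/-- A tour: a continuous 2π-periodic planar curve parametrized by its tangent direction,
with left derivative `Rl θ • uvec θ` and right derivative `Rr θ • uvec θ`, where `Rl`, `Rr`
are bounded, 2π-periodic, and ruled (one-sided limits as indicated). -/
structure IsTour (m : ℝ → EuclideanSpace ℝ (Fin 2)) (Rl Rr : ℝ → ℝ) : Prop where
  continuous_m : Continuous m
  periodic_m : Function.Periodic m (2 * Real.pi)
  periodic_Rl : Function.Periodic Rl (2 * Real.pi)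
  periodic_Rr : Function.Periodic Rr (2 * Real.pi)
  bounded_Rl : ∃ C : ℝ, ∀ θ : ℝ, |Rl θ| ≤ C
  bounded_Rr : ∃ C : ℝ, ∀ θ : ℝ, |Rr θ| ≤ C
  hasLeftDeriv : ∀ θ : ℝ, HasDerivWithinAt m (Rl θ • uvec θ) (Set.Iic θ) θ
  hasRightDeriv : ∀ θ : ℝ, HasDerivWithinAt m (Rr θ • uvec θ) (Set.Ici θ) θ
  leftLim_Rl : ∀ θ₀ : ℝ, Filter.Tendsto Rl (nhdsWithin θ₀ (Set.Iio θ₀)) (nhds (Rl θ₀))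
  leftLim_Rr : ∀ θ₀ : ℝ, Filter.Tendsto Rr (nhdsWithin θ₀ (Set.Iio θ₀)) (nhds (Rl θ₀))
  rightLim_Rl : ∀ θ₀ : ℝ, Filter.Tendsto Rl (nhdsWithin θ₀ (Set.Ioi θ₀)) (nhds (Rr θ₀))
  rightLim_Rr : ∀ θ₀ : ℝ, Filter.Tendsto Rr (nhdsWithin θ₀ (Set.Ioi θ₀)) (nhds (Rr θ₀))

/-- The tangent line `D(θ)` of the tour at parameter θ. -/
def lineD (m : ℝ → EuclideanSpace ℝ (Fin 2)) (θ : ℝ) : Set (EuclideanSpace ℝ (Fin 2)) :=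
  {x | ∃ s : ℝ, x = m θ + s • uvec θ}

/-- The left closed half-plane `D⁺(θ)` bounded by the tangent line `D(θ)`. -/
def halfplaneD (m : ℝ → EuclideanSpace ℝ (Fin 2)) (θ : ℝ) : Set (EuclideanSpace ℝ (Fin 2)) :=
  {x | 0 ≤ ⟪x - m θ, uperp θ⟫}

/-- The core `K(m)` of a tour: the intersection of all left half-planes. -/
def tourCore (m : ℝ → EuclideanSpace ℝ (Fin 2)) : Set (EuclideanSpace ℝ (Fin 2)) :=
  ⋂ θ : ℝ, halfplaneD m θ

/-- If `z` is a boundary point of the core of a tour lying on the tangent line `D(θ₁)`,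
then `z = m θ₁`. -/
theorem statement1 (m : ℝ → EuclideanSpace ℝ (Fin 2)) (Rl Rr : ℝ → ℝ)
    (htour : IsTour m Rl Rr) (θ₁ : ℝ) (z : EuclideanSpace ℝ (Fin 2))
    (hz : z ∈ frontier (tourCore m)) (hz' : z ∈ lineD m θ₁) :
    z = m θ₁ := by
  obtain ⟨s, hs⟩ := hz'
  -- z lies in the (closed) core
  have hclosed : IsClosed (tourCore m) := by
    refine isClosed_iInter fun θ => ?_
    have : halfplaneD m θ = (fun x : EuclideanSpace ℝ (Fin 2) => ⟪x - m θ, uperp θ⟫) ⁻¹' Set.Ici 0 := rfl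
    rw [this]
    exact isClosed_Ici.preimage ((continuous_id.sub continuous_const).inner continuous_const)
  have hK : z ∈ tourCore m := hclosed.closure_eq ▸ frontier_subset_closure hz
  set f : ℝ → ℝ := fun θ => ⟪z - m θ, uperp θ⟫ with hf
  have hf0 : ∀ θ, 0 ≤ f θ := fun θ => Set.mem_iInter.mp hK θ
  have fcoord : ∀ θ, f θ = (z 0 - m θ 0) * (-Real.sin θ) + (z 1 - m θ 1) * Real.cos θ := by
    intro θ
    simp [hf, uperp, PiLp.inner_apply, Fin.sum_univ_two, RCLike.inner_apply]; ring
  have hz0 : z 0 - m θ₁ 0 = s * Real.cos θ₁ := by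
    rw [hs]; simp [uvec]
  have hz1 : z 1 - m θ₁ 1 = s * Real.sin θ₁ := by
    rw [hs]; simp [uvec]
  have hfθ₁ : f θ₁ = 0 := by
    rw [fcoord θ₁, hz0, hz1]; ring
  -- coordinate functions of m and their one-sided derivatives
  have key : ∀ (R : ℝ) (S : Set ℝ), HasDerivWithinAt m (R • uvec θ₁) S θ₁ →
      HasDerivWithinAt f (-s) S θ₁ := by
    intro R S hm
    have m0 : HasDerivWithinAt (fun θ => m θ 0) (R * Real.cos θ₁) S θ₁ := by
      have := (EuclideanSpace.proj (𝕜 := ℝ) (0 : Fin 2)).hasFDerivAt.comp_hasDerivWithinAt θ₁ hm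
      simp [uvec] at this; exact this
    have m1 : HasDerivWithinAt (fun θ => m θ 1) (R * Real.sin θ₁) S θ₁ := by
      have := (EuclideanSpace.proj (𝕜 := ℝ) (1 : Fin 2)).hasFDerivAt.comp_hasDerivWithinAt θ₁ hm
      simp [uvec] at this; exact this
    have F : HasDerivWithinAt
        (fun θ => (z 0 - m θ 0) * (-Real.sin θ) + (z 1 - m θ 1) * Real.cos θ)
        ((0 - R * Real.cos θ₁) * (-Real.sin θ₁) + (z 0 - m θ₁ 0) * (-(Real.cos θ₁))
          + ((0 - R * Real.sin θ₁) * Real.cos θ₁ + (z 1 - m θ₁ 1) * (-(Real.sin θ₁)))) S θ₁ := by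
      exact (((hasDerivWithinAt_const θ₁ S (z 0)).sub m0).mul
          ((Real.hasDerivAt_sin θ₁).neg.hasDerivWithinAt)).add
        (((hasDerivWithinAt_const θ₁ S (z 1)).sub m1).mul
          ((Real.hasDerivAt_cos θ₁).hasDerivWithinAt))
    have heq : (fun θ => (z 0 - m θ 0) * (-Real.sin θ) + (z 1 - m θ 1) * Real.cos θ) = f :=
      funext fun θ => (fcoord θ).symm
    rw [heq] at F
    convert F using 1
    rw [hz0, hz1]
    have h1 := Real.sin_sq_add_cos_sq θ₁
    linear_combination s * h1
  have Fr : HasDerivWithinAt f (-s) (Set.Ici θ₁) θ₁ := key _ _ (htour.hasRightDeriv θ₁)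
  have Fl : HasDerivWithinAt f (-s) (Set.Iic θ₁) θ₁ := key _ _ (htour.hasLeftDeriv θ₁)
  have hr : (0 : ℝ) ≤ -s := by
    have h := hasDerivWithinAt_iff_tendsto_slope.mp Fr
    rw [Set.Ici_sdiff_left] at h
    refine ge_of_tendsto h ?_
    filter_upwards [self_mem_nhdsWithin] with θ hθ
    rw [slope_def_field, hfθ₁, sub_zero]
    exact div_nonneg (hf0 θ) (by simp at hθ; linarith)
  have hl : -s ≤ (0 : ℝ) := by
    have h := hasDerivWithinAt_iff_tendsto_slope.mp Fl
    rw [Set.Iic_diff_right] at h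
    refine le_of_tendsto h ?_
    filter_upwards [self_mem_nhdsWithin] with θ hθ
    rw [slope_def_field, hfθ₁, sub_zero]
    apply div_nonpos_of_nonneg_of_nonpos (hf0 θ)
    simp at hθ; linarith
  have hs0 : s = 0 := by linarith
  rw [hs, hs0]; simp
end

section
/- Fix α ∈ (0,1) and let θ₁, θ₂ ∈ ℝ with θ₁ ≤ θ₂ ≤ θ₁ + π. Then every real number belonging to the convex hull of V(α,θ₁) ∪ V(α,θ₂) belongs to V(α,θ) for some θ ∈ [θ₁, θ₂]. -/
open MeasureTheory Set Filter
open scoped RealInnerProductSpace Topology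

lemma stmt8_inner_uvec (s t : ℝ) : ⟪uvec s, uvec t⟫ = Real.cos (s - t) := by
  simp [uvec, PiLp.inner_apply, Fin.sum_univ_two, Real.cos_sub]
  ring

lemma stmt8_min_right (F : ℝ → ℝ) (a b d : ℝ) (hab : a < b)
    (hmin : ∀ θ ∈ Icc a b, F a ≤ F θ) (hd : HasDerivWithinAt F d (Ici a) a) : 0 ≤ d := by
  rw [hasDerivWithinAt_iff_tendsto_slope, Ici_sdiff_left] at hd
  refine ge_of_tendsto hd ?_
  filter_upwards [Ioc_mem_nhdsGT_of_mem (Set.left_mem_Ico.2 hab)] with θ hθ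
  rw [slope_def_field]
  exact div_nonneg (sub_nonneg.2 (hmin θ ⟨hθ.1.le, hθ.2⟩)) (sub_nonneg.2 hθ.1.le)

lemma stmt8_min_left (F : ℝ → ℝ) (a b d : ℝ) (hab : a < b)
    (hmin : ∀ θ ∈ Icc a b, F b ≤ F θ) (hd : HasDerivWithinAt F d (Iic b) b) : d ≤ 0 := by
  rw [hasDerivWithinAt_iff_tendsto_slope, Iic_diff_right] at hd
  refine le_of_tendsto hd ?_
  filter_upwards [Ico_mem_nhdsLT_of_mem (Set.right_mem_Ioc.2 hab)] with θ hθ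
  rw [slope_def_field]
  exact div_nonpos_of_nonneg_of_nonpos (sub_nonneg.2 (hmin θ ⟨hθ.1, hθ.2.le⟩))
    (sub_nonpos.2 hθ.2.le)

lemma stmt8_derivF (m : ℝ → EuclideanSpace ℝ (Fin 2)) (v w φ θ₀ : ℝ) (s : Set ℝ)
    (hm : HasDerivWithinAt m (v • uvec θ₀) s θ₀) :
    HasDerivWithinAt (fun θ => ⟪uvec φ, m θ⟫ + w * Real.sin (φ - θ))
      ((v - w) * Real.cos (θ₀ - φ)) s θ₀ := by
  have hc : Real.cos (φ - θ₀) = Real.cos (θ₀ - φ) := by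
    rw [← Real.cos_neg]; ring_nf
  have h1 : HasDerivWithinAt (fun θ => ⟪uvec φ, m θ⟫) (v * Real.cos (θ₀ - φ)) s θ₀ := by
    have := ((innerSL ℝ (uvec φ)).hasFDerivAt).comp_hasDerivWithinAt θ₀ hm
    have h2 : (innerSL ℝ (uvec φ)) (v • uvec θ₀) = v * Real.cos (θ₀ - φ) := by
      rw [innerSL_apply_apply, real_inner_smul_right, stmt8_inner_uvec, hc]
    rw [h2] at this
    exact this
  have h2 : HasDerivWithinAt (fun θ : ℝ => w * Real.sin (φ - θ))
      (w * (Real.cos (φ - θ₀) * (-1))) s θ₀ :=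
    (((Real.hasDerivAt_sin (φ - θ₀)).comp θ₀
      ((hasDerivAt_id θ₀).const_sub φ)).const_mul w).hasDerivWithinAt
  have h3 := h1.add h2
  exact h3.congr_deriv (by rw [hc]; ring)

lemma stmt8_core (m : ℝ → EuclideanSpace ℝ (Fin 2)) (vl vr : ℝ → ℝ)
    (hl : ∀ θ₀, HasDerivWithinAt m (vl θ₀ • uvec θ₀) (Iic θ₀) θ₀)
    (hr : ∀ θ₀, HasDerivWithinAt m (vr θ₀ • uvec θ₀) (Ici θ₀) θ₀)
    (w a b : ℝ) (hab : a < b) (hlen : b - a < Real.pi)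
    (ha : vr a < w) (hb : w < vl b) :
    ∃ θ ∈ Icc a b, vl θ ≤ w ∧ w ≤ vr θ := by
  have hcont : Continuous m := by
    refine continuous_iff_continuousAt.2 fun x => ?_
    have := ((hl x).continuousWithinAt).union ((hr x).continuousWithinAt)
    rw [Iic_union_Ici] at this
    exact continuousWithinAt_univ m x |>.mp this
  set φ : ℝ := (a + b) / 2 with hφ
  set F : ℝ → ℝ := fun θ => ⟪uvec φ, m θ⟫ + w * Real.sin (φ - θ) with hF
  have hFc : Continuous F :=
    (Continuous.inner continuous_const hcont).add
      (continuous_const.mul (Real.continuous_sin.comp (continuous_const.sub continuous_id)))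
  have hcos : ∀ x ∈ Icc a b, 0 < Real.cos (x - φ) := by
    intro x hx
    apply Real.cos_pos_of_mem_Ioo
    constructor <;> [skip; skip] <;>
    · simp only [hφ]
      cases' hx with h1 h2
      nlinarith [Real.pi_pos]
  obtain ⟨θs, hθs, hmin⟩ := isCompact_Icc.exists_isMinOn (nonempty_Icc.2 hab.le) hFc.continuousOn
  have hminθ : ∀ θ ∈ Icc a b, F θs ≤ F θ := fun θ hθ => hmin hθ
  rcases eq_or_lt_of_le hθs.1 with hEa | hIa
  · exfalso
    have hd := stmt8_derivF m (vr a) w φ a (Ici a) (hr a)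
    have h0 : 0 ≤ (vr a - w) * Real.cos (a - φ) := by
      apply stmt8_min_right F a b _ hab _ hd
      intro θ hθ; rw [hEa]; exact hminθ θ hθ
    nlinarith [hcos a ⟨le_rfl, hab.le⟩]
  rcases eq_or_lt_of_le hθs.2 with hEb | hIb
  · exfalso
    have hd := stmt8_derivF m (vl b) w φ b (Iic b) (hl b)
    have h0 : (vl b - w) * Real.cos (b - φ) ≤ 0 := by
      apply stmt8_min_left F a b _ hab _ hd
      intro θ hθ; rw [← hEb]; exact hminθ θ hθ
    nlinarith [hcos b ⟨hab.le, le_rfl⟩]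
  · refine ⟨θs, hθs, ?_, ?_⟩
    · have hd := stmt8_derivF m (vl θs) w φ θs (Iic θs) (hl θs)
      have h0 : (vl θs - w) * Real.cos (θs - φ) ≤ 0 := by
        apply stmt8_min_left F a θs _ hIa _ hd
        intro θ hθ; exact hminθ θ ⟨hθ.1, hθ.2.trans hθs.2⟩
      nlinarith [hcos θs hθs]
    · have hd := stmt8_derivF m (vr θs) w φ θs (Ici θs) (hr θs)
      have h0 : 0 ≤ (vr θs - w) * Real.cos (θs - φ) := by
        apply stmt8_min_right F θs b _ hIb _ hd
        intro θ hθ; exact hminθ θ ⟨hθs.1.trans hθ.1, hθ.2⟩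
      nlinarith [hcos θs hθs]

lemma stmt8_solve (m : ℝ → EuclideanSpace ℝ (Fin 2)) (vl vr : ℝ → ℝ)
    (hl : ∀ θ₀, HasDerivWithinAt m (vl θ₀ • uvec θ₀) (Iic θ₀) θ₀)
    (hr : ∀ θ₀, HasDerivWithinAt m (vr θ₀ • uvec θ₀) (Ici θ₀) θ₀)
    (w a b : ℝ) (hab : a ≤ b) (hlen : b - a ≤ Real.pi)
    (ha : vr a < w) (hb : w < vl b) :
    ∃ θ ∈ Icc a b, w ∈ Set.uIcc (vl θ) (vr θ) := by
  rcases eq_or_lt_of_le hab with rfl | hab'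
  · exact ⟨a, ⟨le_rfl, le_rfl⟩, Set.mem_uIcc.2 (Or.inr ⟨ha.le, hb.le⟩)⟩
  rcases lt_or_eq_of_le hlen with hlt | heq
  · obtain ⟨θ, hθ, h1, h2⟩ := stmt8_core m vl vr hl hr w a b hab' hlt ha hb
    exact ⟨θ, hθ, Set.mem_uIcc.2 (Or.inl ⟨h1, h2⟩)⟩
  · set φ0 : ℝ := (a + b) / 2 with hφ0
    have hpi := Real.pi_pos
    have haφ : a < φ0 := by rw [hφ0]; linarith
    have hφb : φ0 < b := by rw [hφ0]; linarith
    by_cases hmem : w ∈ Set.uIcc (vl φ0) (vr φ0)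
    · exact ⟨φ0, ⟨haφ.le, hφb.le⟩, hmem⟩
    · rcases le_or_gt w (vr φ0) with h1 | h1 <;> rcases le_or_gt w (vl φ0) with h2 | h2
      · -- both above w : recurse on [a, φ0]
        have h2' : w < vl φ0 := lt_of_le_of_ne h2
          (fun he => hmem (Set.mem_uIcc.2 (Or.inl ⟨he.ge, h1⟩)))
        have hlen2 : φ0 - a < Real.pi := by rw [hφ0]; linarith
        obtain ⟨θ, hθ, h3, h4⟩ := stmt8_core m vl vr hl hr w a φ0 haφ hlen2 ha h2'
        exact ⟨θ, ⟨hθ.1, hθ.2.trans hφb.le⟩, Set.mem_uIcc.2 (Or.inl ⟨h3, h4⟩)⟩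
      · -- vl φ0 < w ≤ vr φ0 : membership
        exact absurd (Set.mem_uIcc.2 (Or.inl ⟨h2.le, h1⟩)) hmem
      · -- vr φ0 < w ≤ vl φ0 : membership
        exact absurd (Set.mem_uIcc.2 (Or.inr ⟨h1.le, h2⟩)) hmem
      · -- both < w : recurse on [φ0, b]
        have hlen2 : b - φ0 < Real.pi := by rw [hφ0]; linarith
        obtain ⟨θ, hθ, h3, h4⟩ := stmt8_core m vl vr hl hr w φ0 b hφb hlen2 h1 hb
        exact ⟨θ, ⟨haφ.le.trans hθ.1, hθ.2⟩, Set.mem_uIcc.2 (Or.inl ⟨h3, h4⟩)⟩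

lemma stmt8_not_uIcc {w x y : ℝ} (hn : w ∉ Set.uIcc x y) :
    (x < w ∧ y < w) ∨ (w < x ∧ w < y) := by
  rcases lt_or_ge x w with hx | hx
  · exact Or.inl ⟨hx, lt_of_not_ge fun hy => hn (Set.mem_uIcc.2 (Or.inl ⟨hx.le, hy⟩))⟩
  · refine Or.inr ⟨lt_of_le_of_ne hx fun e => hn ?_, lt_of_not_ge fun hy =>
      hn (Set.mem_uIcc.2 (Or.inr ⟨hy, hx⟩))⟩
    rw [e]; exact Set.left_mem_uIcc

/-- Intermediate value property: every point of the convex hull of `V(α,θ₁) ∪ V(α,θ₂)`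
belongs to `V(α,θ)` for some `θ ∈ [θ₁,θ₂]`, whenever `θ₁ ≤ θ₂ ≤ θ₁ + π`. -/
theorem statement8
    (K : Set (EuclideanSpace ℝ (Fin 2)))
    (hK_compact : IsCompact K) (hK_conv : Convex ℝ K) (hK_int : (interior K).Nonempty)
    (t : ℝ → ℝ → ℝ)
    (ht : ∀ α ∈ Set.Ioo (0:ℝ) 1, ∀ θ : ℝ,
      volume (K ∩ {x | ⟪x, uperp θ⟫ ≤ t α θ}) = ENNReal.ofReal α * volume K)
    (b c : ℝ → ℝ → EuclideanSpace ℝ (Fin 2))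
    (hchord : ∀ α ∈ Set.Ioo (0:ℝ) 1, ∀ θ : ℝ,
      K ∩ {x | ⟪x, uperp θ⟫ = t α θ} = segment ℝ (b α θ) (c α θ))
    (hbc_ne : ∀ α ∈ Set.Ioo (0:ℝ) 1, ∀ θ : ℝ, b α θ ≠ c α θ)
    (horient : ∀ α ∈ Set.Ioo (0:ℝ) 1, ∀ θ : ℝ, 0 ≤ ⟪c α θ - b α θ, uvec θ⟫)
    -- `vl α θ₀` and `vr α θ₀` are the one-sided velocities of the midpoint curve
    (vl vr : ℝ → ℝ → ℝ)
    (hvl : ∀ α ∈ Set.Ioo (0:ℝ) 1, ∀ θ₀ : ℝ,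
      HasDerivWithinAt (fun θ => (2⁻¹ : ℝ) • (b α θ + c α θ))
        (vl α θ₀ • uvec θ₀) (Set.Iic θ₀) θ₀)
    (hvr : ∀ α ∈ Set.Ioo (0:ℝ) 1, ∀ θ₀ : ℝ,
      HasDerivWithinAt (fun θ => (2⁻¹ : ℝ) • (b α θ + c α θ))
        (vr α θ₀ • uvec θ₀) (Set.Ici θ₀) θ₀)
    (α : ℝ) (hα : α ∈ Set.Ioo (0:ℝ) 1)
    (θ₁ θ₂ : ℝ) (h₁₂ : θ₁ ≤ θ₂) (h₂₁ : θ₂ ≤ θ₁ + Real.pi) :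
    ∀ w ∈ convexHull ℝ (Set.uIcc (vl α θ₁) (vr α θ₁) ∪ Set.uIcc (vl α θ₂) (vr α θ₂)),
      ∃ θ ∈ Set.Icc θ₁ θ₂, w ∈ Set.uIcc (vl α θ) (vr α θ) := by
  intro w hw
  have hl := hvl α hα
  have hr := hvr α hα
  set L : ℝ := min (min (vl α θ₁) (vr α θ₁)) (min (vl α θ₂) (vr α θ₂)) with hL
  set U : ℝ := max (max (vl α θ₁) (vr α θ₁)) (max (vl α θ₂) (vr α θ₂)) with hU
  have hsub : convexHull ℝ (Set.uIcc (vl α θ₁) (vr α θ₁) ∪ Set.uIcc (vl α θ₂) (vr α θ₂))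
      ⊆ Icc L U := by
    apply convexHull_min _ (convex_Icc L U)
    apply union_subset
    · exact Set.uIcc_subset_Icc
        ⟨(min_le_left _ _).trans (min_le_left _ _), (le_max_left _ _).trans (le_max_left _ _)⟩
        ⟨(min_le_left _ _).trans (min_le_right _ _), (le_max_right _ _).trans (le_max_left _ _)⟩
    · exact Set.uIcc_subset_Icc
        ⟨(min_le_right _ _).trans (min_le_left _ _), (le_max_left _ _).trans (le_max_right _ _)⟩
        ⟨(min_le_right _ _).trans (min_le_right _ _), (le_max_right _ _).trans (le_max_right _ _)⟩
  have hwLU := hsub hw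
  by_cases h1 : w ∈ Set.uIcc (vl α θ₁) (vr α θ₁)
  · exact ⟨θ₁, ⟨le_rfl, h₁₂⟩, h1⟩
  by_cases h2 : w ∈ Set.uIcc (vl α θ₂) (vr α θ₂)
  · exact ⟨θ₂, ⟨h₁₂, le_rfl⟩, h2⟩
  rcases stmt8_not_uIcc h1 with ⟨ha1, ha2⟩ | ⟨hb1, hb2⟩ <;>
    rcases stmt8_not_uIcc h2 with ⟨hc1, hc2⟩ | ⟨hd1, hd2⟩
  · -- everything < w : contradicts w ≤ U
    exfalso
    have : U < w := max_lt (max_lt ha1 ha2) (max_lt hc1 hc2)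
    linarith [hwLU.2]
  · -- case A : V(θ₁) < w < V(θ₂)
    exact stmt8_solve _ (vl α) (vr α) hl hr w θ₁ θ₂ h₁₂ (by linarith) ha2 hd1
  · -- case B : V(θ₂) < w < V(θ₁) : mirror
    have hl' : ∀ θ₀, HasDerivWithinAt (fun θ => -((2⁻¹ : ℝ) • (b α θ + c α θ)))
        ((-(vl α θ₀)) • uvec θ₀) (Set.Iic θ₀) θ₀ := fun θ₀ => by
      rw [neg_smul]; exact (hl θ₀).neg
    have hr' : ∀ θ₀, HasDerivWithinAt (fun θ => -((2⁻¹ : ℝ) • (b α θ + c α θ)))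
        ((-(vr α θ₀)) • uvec θ₀) (Set.Ici θ₀) θ₀ := fun θ₀ => by
      rw [neg_smul]; exact (hr θ₀).neg
    obtain ⟨θ, hθ, hmem⟩ := stmt8_solve _ (fun θ => -(vl α θ)) (fun θ => -(vr α θ))
      hl' hr' (-w) θ₁ θ₂ h₁₂ (by linarith) (by simpa using hb2) (by simpa using hc1)
    refine ⟨θ, hθ, ?_⟩
    rcases Set.mem_uIcc.1 hmem with ⟨p, q⟩ | ⟨p, q⟩
    · exact Set.mem_uIcc.2 (Or.inr ⟨by linarith, by linarith⟩)
    · exact Set.mem_uIcc.2 (Or.inl ⟨by linarith, by linarith⟩)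
  · -- everything > w : contradicts L ≤ w
    exfalso
    have : w < L := lt_min (lt_min hb1 hb2) (lt_min hd1 hd2)
    linarith [hwLU.1]
end

section
/- If K is not centrally symmetric, then there exists α ∈ (0, 1/2) such that B(α) ≠ ∅ and the α-core K_α = ⋂_{θ∈ℝ} Δ⁺(α,θ) has nonempty interior. (Equivalently, the critical value α_B below which the envelope of α-sections coincides with the boundary of the α-core is strictly smaller than the critical value α_K at which the α-core shrinks to a point.) -/
open MeasureTheory Set Filter
open scoped RealInnerProductSpace Topology

namespace St18

abbrev E2 := EuclideanSpace ℝ (Fin 2)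

lemma ext2 {x y : E2} (h0 : x 0 = y 0) (h1 : x 1 = y 1) : x = y := by
  ext i
  fin_cases i
  · exact h0
  · exact h1

lemma uperp0 (θ : ℝ) : uperp θ 0 = -Real.sin θ := rfl
lemma uperp1 (θ : ℝ) : uperp θ 1 = Real.cos θ := rfl
lemma uvec0 (θ : ℝ) : uvec θ 0 = Real.cos θ := rfl
lemma uvec1 (θ : ℝ) : uvec θ 1 = Real.sin θ := rfl

lemma inner_uperp (x : E2) (θ : ℝ) : ⟪x, uperp θ⟫ = x 0 * (-Real.sin θ) + x 1 * Real.cos θ := by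
  simp [PiLp.inner_apply, Fin.sum_univ_two, uperp0, uperp1]; ring

lemma inner_uvec (x : E2) (θ : ℝ) : ⟪x, uvec θ⟫ = x 0 * Real.cos θ + x 1 * Real.sin θ := by
  simp [PiLp.inner_apply, Fin.sum_univ_two, uvec0, uvec1]; ring

lemma norm_uperp (θ : ℝ) : ‖uperp θ‖ = 1 := by
  have h : ⟪uperp θ, uperp θ⟫ = 1 := by
    rw [inner_uperp, uperp0, uperp1]; nlinarith [Real.sin_sq_add_cos_sq θ]
  rw [@norm_eq_sqrt_real_inner, h, Real.sqrt_one]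

lemma norm_uvec (θ : ℝ) : ‖uvec θ‖ = 1 := by
  have h : ⟪uvec θ, uvec θ⟫ = 1 := by
    rw [inner_uvec, uvec0, uvec1]; nlinarith [Real.sin_sq_add_cos_sq θ]
  rw [@norm_eq_sqrt_real_inner, h, Real.sqrt_one]

lemma uperp_add_pi (θ : ℝ) : uperp (θ + Real.pi) = -uperp θ := by
  apply ext2 <;> simp [uperp0, uperp1, Real.sin_add, Real.cos_add]

lemma uperp_add_int_two_pi (θ : ℝ) (k : ℤ) : uperp (θ + k * (2 * Real.pi)) = uperp θ := by
  apply ext2 <;> simp [uperp0, uperp1, Real.sin_add_int_mul_two_pi, Real.cos_add_int_mul_two_pi]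

lemma inner_uvec_uperp (φ θ : ℝ) : ⟪uvec φ, uperp θ⟫ = Real.sin (φ - θ) := by
  rw [inner_uperp, uvec0, uvec1, Real.sin_sub]; ring

lemma eq_zero_of_inner {w : E2} {θ : ℝ} (h1 : ⟪w, uvec θ⟫ = 0) (h2 : ⟪w, uperp θ⟫ = 0) :
    w = 0 := by
  rw [inner_uvec] at h1; rw [inner_uperp] at h2
  have hsc := Real.sin_sq_add_cos_sq θ
  have e0 : w 0 = 0 := by
    linear_combination Real.cos θ * h1 - Real.sin θ * h2 - w 0 * hsc
  have e1 : w 1 = 0 := by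
    linear_combination Real.sin θ * h1 + Real.cos θ * h2 - w 1 * hsc
  apply ext2 <;> simp [e0, e1]

lemma exists_uperp_eq (v : E2) (hv : ‖v‖ = 1) : ∃ θ, uperp θ = v := by
  have hn : v 0 ^ 2 + v 1 ^ 2 = 1 := by
    have h2 : ⟪v, v⟫ = 1 := by
      rw [@real_inner_self_eq_norm_sq, hv]; norm_num
    rw [PiLp.inner_apply, Fin.sum_univ_two] at h2; simpa [sq, mul_comm] using h2
  have h1 : (-1:ℝ) ≤ v 1 := by nlinarith
  have h1' : v 1 ≤ 1 := by nlinarith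
  have hs : Real.sqrt (1 - v 1 ^ 2) = |v 0| := by
    rw [show (1 : ℝ) - v 1 ^2 = v 0 ^2 by linarith, Real.sqrt_sq_eq_abs]
  rcases le_or_gt 0 (v 0) with h0 | h0
  · refine ⟨-Real.arccos (v 1), ext2 ?_ ?_⟩
    · rw [uperp0, Real.sin_neg, neg_neg, Real.sin_arccos, hs, abs_of_nonneg h0]
    · rw [uperp1, Real.cos_neg, Real.cos_arccos h1 h1']
  · refine ⟨Real.arccos (v 1), ext2 ?_ ?_⟩
    · rw [uperp0, Real.sin_arccos, hs, abs_of_neg h0, neg_neg]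
    · rw [uperp1, Real.cos_arccos h1 h1']


noncomputable def F (K : Set E2) (θ s : ℝ) : ENNReal := volume (K ∩ {x | ⟪x, uperp θ⟫ ≤ s})

variable {K : Set E2}

lemma cont_inner_uperp (θ : ℝ) : Continuous fun x : E2 => ⟪x, uperp θ⟫ :=
  continuous_id.inner continuous_const

lemma meas_le (θ s : ℝ) : MeasurableSet {x : E2 | ⟪x, uperp θ⟫ ≤ s} :=
  (isClosed_le (cont_inner_uperp θ) continuous_const).measurableSet

lemma meas_lt (θ s : ℝ) : MeasurableSet {x : E2 | s < ⟪x, uperp θ⟫} :=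
  (isOpen_lt continuous_const (cont_inner_uperp θ)).measurableSet

lemma null_line (θ s : ℝ) : volume {x : E2 | ⟪x, uperp θ⟫ = s} = 0 := by
  set v := uperp θ with hv
  have hv1 : ⟪v, v⟫ = 1 := by
    rw [real_inner_self_eq_norm_sq, norm_uperp]; norm_num
  set W : Submodule ℝ E2 := LinearMap.ker ((innerSL ℝ v : E2 →L[ℝ] ℝ) : E2 →ₗ[ℝ] ℝ) with hW
  have hWt : W ≠ ⊤ := by
    intro h
    have : v ∈ W := h ▸ Submodule.mem_top
    rw [hW, LinearMap.mem_ker] at this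
    simp only [ContinuousLinearMap.coe_coe, innerSL_apply_apply] at this
    rw [this] at hv1; norm_num at hv1
  have hset : {x : E2 | ⟪x, uperp θ⟫ = s} = (fun x => x + -(s • v)) ⁻¹' (W : Set E2) := by
    ext x
    have hcalc : ⟪v, x + -(s • v)⟫ = ⟪v, x⟫ - s := by
      rw [inner_add_right, inner_neg_right, inner_smul_right, hv1]; ring
    simp only [Set.mem_setOf_eq, Set.mem_preimage, SetLike.mem_coe, hW, LinearMap.mem_ker,
      ContinuousLinearMap.coe_coe, innerSL_apply_apply, hcalc, real_inner_comm v x]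
    constructor
    · intro h; rw [hv, real_inner_comm, h]; ring
    · intro h; rw [hv, real_inner_comm] at h; linarith
  rw [hset, measure_preimage_add_right]
  exact Measure.addHaar_submodule volume W hWt

lemma null_line' (θ s : ℝ) : volume (K ∩ {x : E2 | ⟪x, uperp θ⟫ = s}) = 0 :=
  measure_mono_null Set.inter_subset_right (null_line θ s)

lemma F_mono (θ : ℝ) {s₁ s₂ : ℝ} (h : s₁ ≤ s₂) : F K θ s₁ ≤ F K θ s₂ := by
  apply measure_mono (Set.inter_subset_inter_right K _)
  intro x hx
  rw [Set.mem_setOf_eq] at hx ⊢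
  exact le_trans hx h

lemma compl_add (hK : MeasurableSet K) (θ s : ℝ) :
    F K θ s + volume (K ∩ {x | s < ⟪x, uperp θ⟫}) = volume K := by
  rw [F, ← measure_union _ (hK.inter (meas_lt θ s))]
  · congr 1
    ext x
    simp only [Set.mem_union, Set.mem_inter_iff, Set.mem_setOf_eq]
    constructor
    · rintro (⟨h, _⟩ | ⟨h, _⟩) <;> exact h
    · intro h
      rcases le_or_gt (⟪x, uperp θ⟫) s with h' | h'
      · exact Or.inl ⟨h, h'⟩
      · exact Or.inr ⟨h, h'⟩
  · apply Set.disjoint_left.2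
    rintro x ⟨_, h1⟩ ⟨_, h2⟩
    rw [Set.mem_setOf_eq] at h1 h2
    exact absurd h1 (not_le.2 h2)

lemma ge_eq_gt (θ s : ℝ) :
    volume (K ∩ {x : E2 | s ≤ ⟪x, uperp θ⟫}) = volume (K ∩ {x | s < ⟪x, uperp θ⟫}) := by
  apply le_antisymm
  · calc volume (K ∩ {x : E2 | s ≤ ⟪x, uperp θ⟫})
        ≤ volume ((K ∩ {x | s < ⟪x, uperp θ⟫}) ∪ (K ∩ {x : E2 | ⟪x, uperp θ⟫ = s})) := by
          apply measure_mono
          rintro x ⟨hxK, hx⟩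
          rw [Set.mem_setOf_eq] at hx
          rcases lt_or_eq_of_le hx with h | h
          · exact Or.inl ⟨hxK, h⟩
          · exact Or.inr ⟨hxK, h.symm⟩
      _ ≤ volume (K ∩ {x | s < ⟪x, uperp θ⟫}) + volume (K ∩ {x : E2 | ⟪x, uperp θ⟫ = s}) :=
          measure_union_le _ _
      _ = volume (K ∩ {x | s < ⟪x, uperp θ⟫}) := by rw [null_line' θ s, add_zero]
  · apply measure_mono (Set.inter_subset_inter_right K _)
    intro x hx
    rw [Set.mem_setOf_eq] at hx ⊢
    exact le_of_lt hx

lemma lt_eq_le (θ s : ℝ) :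
    volume (K ∩ {x : E2 | ⟪x, uperp θ⟫ < s}) = F K θ s := by
  apply le_antisymm
  · apply measure_mono (Set.inter_subset_inter_right K _)
    intro x hx
    rw [Set.mem_setOf_eq] at hx ⊢
    exact le_of_lt hx
  · calc F K θ s ≤ volume ((K ∩ {x : E2 | ⟪x, uperp θ⟫ < s}) ∪ (K ∩ {x : E2 | ⟪x, uperp θ⟫ = s})) := by
          apply measure_mono
          rintro x ⟨hxK, hx⟩
          rw [Set.mem_setOf_eq] at hx
          rcases lt_or_eq_of_le hx with h | h
          · exact Or.inl ⟨hxK, h⟩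
          · exact Or.inr ⟨hxK, h⟩
      _ ≤ _ + volume (K ∩ {x : E2 | ⟪x, uperp θ⟫ = s}) := measure_union_le _ _
      _ = volume (K ∩ {x : E2 | ⟪x, uperp θ⟫ < s}) := by rw [null_line' θ s, add_zero]

lemma flipF (hK : MeasurableSet K) (θ s : ℝ) :
    F K (θ + Real.pi) s + F K θ (-s) = volume K := by
  have h1 : F K (θ + Real.pi) s = volume (K ∩ {x | -s < ⟪x, uperp θ⟫}) := by
    rw [F]
    have : {x : E2 | ⟪x, uperp (θ + Real.pi)⟫ ≤ s} = {x : E2 | -s ≤ ⟪x, uperp θ⟫} := by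
      ext x
      rw [Set.mem_setOf_eq, Set.mem_setOf_eq, uperp_add_pi, inner_neg_right]
      constructor <;> intro h <;> linarith
    rw [this]
    exact ge_eq_gt θ (-s)
  rw [h1, add_comm]
  exact compl_add hK θ (-s)


lemma inner_le_of_mem_ball {z x : E2} {ρ : ℝ} (hx : x ∈ Metric.ball z ρ) (θ : ℝ) :
    |⟪x, uperp θ⟫ - ⟪z, uperp θ⟫| ≤ ρ := by
  rw [← inner_sub_left]
  calc |⟪x - z, uperp θ⟫| ≤ ‖x - z‖ * ‖uperp θ‖ := abs_real_inner_le_norm _ _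
    _ = ‖x - z‖ := by rw [norm_uperp, mul_one]
    _ ≤ ρ := le_of_lt (by rwa [Metric.mem_ball, dist_eq_norm] at hx)

/-- key geometric fact: a convex set with an interior ball and points on both sides of a slab
contains a ball inside the open slab. -/
lemma inner_combo (a b v : E2) (s t : ℝ) : ⟪s • a + t • b, v⟫ = s * ⟪a, v⟫ + t * ⟪b, v⟫ := by
  rw [inner_add_left, real_inner_smul_left, real_inner_smul_left]

/-- key geometric fact: a convex set with an interior ball and points on both sides of a slab
contains a ball inside the open slab. -/
lemma ball_in_slab (hK_conv : Convex ℝ K) {y : E2} {r : ℝ} (hr : 0 < r)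
    (hball : Metric.ball y r ⊆ K) {θ s₁ s₂ : ℝ} (h12 : s₁ < s₂)
    {qm qp : E2} (hqm : qm ∈ K) (hqp : qp ∈ K)
    (hlm : ⟪qm, uperp θ⟫ < s₁) (hlp : s₂ < ⟪qp, uperp θ⟫) :
    ∃ p ρ, 0 < ρ ∧ Metric.ball p ρ ⊆ K ∩ {x | s₁ < ⟪x, uperp θ⟫} ∩ {x | ⟪x, uperp θ⟫ < s₂} := by
  set lm := ⟪qm, uperp θ⟫ with hlm'
  set lp := ⟪qp, uperp θ⟫ with hlp'
  set mid := (s₁ + s₂)/2 with hmid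
  have hl : lm < lp := by linarith
  set τ := (mid - lm) / (lp - lm) with hτ
  have hτ0 : 0 < τ := div_pos (by rw [hmid]; linarith) (by linarith)
  have hτ1 : τ < 1 := (div_lt_one (by linarith)).2 (by rw [hmid]; linarith)
  set z := (1 - τ) • qm + τ • qp with hz
  have hzK : z ∈ K := hK_conv hqm hqp (by linarith) (le_of_lt hτ0) (by ring)
  have hzl : ⟪z, uperp θ⟫ = mid := by
    rw [hz, inner_combo, ← hlm', ← hlp']
    have : τ * (lp - lm) = mid - lm := by
      rw [hτ, div_mul_cancel₀ _ (sub_ne_zero.2 (ne_of_gt hl))]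
    linarith [this]
  set ly := ⟪y, uperp θ⟫ with hly
  set lam := min (1/2 : ℝ) ((s₂ - s₁) / (4 * (|ly - mid| + r))) with hlam
  have hd : 0 < |ly - mid| + r := by positivity
  have hlam0 : 0 < lam := lt_min (by norm_num) (div_pos (by linarith) (by positivity))
  have hlam1 : lam < 1 := lt_of_le_of_lt (min_le_left _ _) (by norm_num)
  have hlamb : lam * (|ly - mid| + r) ≤ (s₂ - s₁) / 4 := by
    have h5 : lam ≤ (s₂ - s₁) / (4 * (|ly - mid| + r)) := min_le_right _ _
    calc lam * (|ly - mid| + r) ≤ ((s₂ - s₁) / (4 * (|ly - mid| + r))) * (|ly - mid| + r) :=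
          mul_le_mul_of_nonneg_right h5 (le_of_lt hd)
      _ = (s₂ - s₁) / 4 := by
          field_simp
  refine ⟨(1 - lam) • z + lam • y, lam * r, by positivity, ?_⟩
  intro w hw
  set p := (1 - lam) • z + lam • y with hp
  have key : (1 - lam) • z + lam • (y + lam⁻¹ • (w - p)) = w := by
    have h9 : lam • lam⁻¹ • (w - p) = w - p := smul_inv_smul₀ (ne_of_gt hlam0) _
    rw [smul_add lam, h9, hp]
    abel
  have hyK : y + lam⁻¹ • (w - p) ∈ K := by
    apply hball
    rw [Metric.mem_ball, dist_eq_norm, add_sub_cancel_left, norm_smul, Real.norm_eq_abs,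
      abs_inv, abs_of_pos hlam0, inv_mul_lt_iff₀ hlam0]
    rw [Metric.mem_ball, dist_eq_norm] at hw
    exact hw
  have hwK : w ∈ K := by
    rw [← key]
    exact hK_conv hzK hyK (by linarith) (le_of_lt hlam0) (by ring)
  have hpl : ⟪p, uperp θ⟫ - mid = lam * (ly - mid) := by
    rw [hp, inner_combo, hzl, ← hly]; ring
  have h2 : |⟪w, uperp θ⟫ - ⟪p, uperp θ⟫| ≤ lam * r := inner_le_of_mem_ball hw θ
  have h3 : |⟪w, uperp θ⟫ - mid| ≤ lam * r + |lam * (ly - mid)| := by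
    have hsplit : ⟪w, uperp θ⟫ - mid = (⟪w, uperp θ⟫ - ⟪p, uperp θ⟫) + lam * (ly - mid) := by
      rw [← hpl]; ring
    rw [hsplit]
    exact le_trans (abs_add_le _ _) (add_le_add h2 le_rfl)
  have h4 : lam * r + |lam * (ly - mid)| ≤ (s₂ - s₁)/4 := by
    rw [abs_mul, abs_of_pos hlam0]
    calc lam * r + lam * |ly - mid| = lam * (|ly - mid| + r) := by ring
      _ ≤ (s₂ - s₁) / 4 := hlamb
  have hwl : |⟪w, uperp θ⟫ - mid| < (s₂ - s₁)/2 := by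
    calc |⟪w, uperp θ⟫ - mid| ≤ (s₂ - s₁)/4 := le_trans h3 h4
      _ < (s₂ - s₁)/2 := by linarith
  rw [abs_lt, hmid] at hwl
  refine ⟨⟨hwK, ?_⟩, ?_⟩ <;> rw [Set.mem_setOf_eq] <;> [linarith [hwl.1]; linarith [hwl.2]]


lemma interior_ball (hK_int : (interior K).Nonempty) :
    ∃ y r, 0 < r ∧ Metric.ball y r ⊆ K := by
  obtain ⟨y, hy⟩ := hK_int
  obtain ⟨r, hr, hball⟩ := Metric.isOpen_iff.1 isOpen_interior y hy
  exact ⟨y, r, hr, hball.trans interior_subset⟩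

lemma muK_pos (hK_int : (interior K).Nonempty) : 0 < volume K := by
  obtain ⟨y, r, hr, hball⟩ := interior_ball hK_int
  exact lt_of_lt_of_le (Metric.measure_ball_pos volume y hr) (measure_mono hball)

lemma muK_fin (hK_compact : IsCompact K) : volume K < ⊤ := hK_compact.measure_lt_top

/-- strict monotonicity of F in the relevant range -/
lemma F_lt (hK_compact : IsCompact K) (hK_conv : Convex ℝ K) (hK_int : (interior K).Nonempty)
    (θ : ℝ) {s₁ s₂ : ℝ} (h12 : s₁ < s₂) (h1 : 0 < F K θ s₁) (h2 : F K θ s₂ < volume K) :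
    F K θ s₁ < F K θ s₂ := by
  have hKm : MeasurableSet K := hK_compact.isClosed.measurableSet
  -- a point strictly below s₁
  have hqm : ∃ qm ∈ K, ⟪qm, uperp θ⟫ < s₁ := by
    have h1' : 0 < volume (K ∩ {x : E2 | ⟪x, uperp θ⟫ < s₁}) := by rwa [lt_eq_le θ s₁]
    obtain ⟨x, hx⟩ := nonempty_of_measure_ne_zero (ne_of_gt h1')
    exact ⟨x, hx.1, hx.2⟩
  have hqp : ∃ qp ∈ K, s₂ < ⟪qp, uperp θ⟫ := by
    have h2' : 0 < volume (K ∩ {x : E2 | s₂ < ⟪x, uperp θ⟫}) := by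
      by_contra h
      push_neg at h
      have h0 : volume (K ∩ {x : E2 | s₂ < ⟪x, uperp θ⟫}) = 0 := le_antisymm h zero_le
      have := compl_add hKm θ s₂
      rw [h0, add_zero] at this
      exact absurd this (ne_of_lt h2)
    obtain ⟨x, hx⟩ := nonempty_of_measure_ne_zero (ne_of_gt h2')
    exact ⟨x, hx.1, hx.2⟩
  obtain ⟨qm, hqmK, hqml⟩ := hqm
  obtain ⟨qp, hqpK, hqpl⟩ := hqp
  obtain ⟨y, r, hr, hball⟩ := interior_ball hK_int
  obtain ⟨p, ρ, hρ, hsub⟩ := ball_in_slab hK_conv hr hball h12 hqmK hqpK hqml hqpl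
  have hdisj : Disjoint (K ∩ {x : E2 | ⟪x, uperp θ⟫ ≤ s₁}) (Metric.ball p ρ) := by
    apply Set.disjoint_left.2
    rintro x ⟨_, hx1⟩ hx2
    obtain ⟨⟨_, hx3⟩, _⟩ := hsub hx2
    rw [Set.mem_setOf_eq] at hx1 hx3
    linarith
  have hunion : (K ∩ {x : E2 | ⟪x, uperp θ⟫ ≤ s₁}) ∪ Metric.ball p ρ ⊆
      K ∩ {x : E2 | ⟪x, uperp θ⟫ ≤ s₂} := by
    rintro x (⟨hxK, hx⟩ | hx)
    · rw [Set.mem_setOf_eq] at hx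
      exact ⟨hxK, by rw [Set.mem_setOf_eq]; linarith⟩
    · obtain ⟨⟨hxK, _⟩, hx2⟩ := hsub hx
      rw [Set.mem_setOf_eq] at hx2
      exact ⟨hxK, by rw [Set.mem_setOf_eq]; linarith⟩
  calc F K θ s₁ < F K θ s₁ + volume (Metric.ball p ρ) := by
        apply ENNReal.lt_add_right _ (ne_of_gt (Metric.measure_ball_pos volume p hρ))
        exact ne_top_of_le_ne_top (ne_of_lt (muK_fin hK_compact))
          (measure_mono Set.inter_subset_left)
    _ = volume ((K ∩ {x : E2 | ⟪x, uperp θ⟫ ≤ s₁}) ∪ Metric.ball p ρ) :=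
        (measure_union hdisj measurableSet_ball).symm
    _ ≤ F K θ s₂ := measure_mono hunion


section TLem

variable {K : Set E2} {t : ℝ → ℝ → ℝ}
variable (hK_compact : IsCompact K) (hK_conv : Convex ℝ K) (hK_int : (interior K).Nonempty)
variable (ht : ∀ α ∈ Set.Ioo (0:ℝ) 1, ∀ θ : ℝ,
      volume (K ∩ {x | ⟪x, uperp θ⟫ ≤ t α θ}) = ENNReal.ofReal α * volume K)

include ht in
lemma tF {α : ℝ} (hα : α ∈ Set.Ioo (0:ℝ) 1) (θ : ℝ) :
    F K θ (t α θ) = ENNReal.ofReal α * volume K := ht α hα θ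

include hK_int ht in
lemma F_t_pos {α : ℝ} (hα : α ∈ Set.Ioo (0:ℝ) 1) (θ : ℝ) : 0 < F K θ (t α θ) := by
  rw [tF ht hα θ]
  exact ENNReal.mul_pos (by simp [ENNReal.ofReal_eq_zero, not_le, hα.1])
    (ne_of_gt (muK_pos hK_int))

include hK_compact hK_int ht in
lemma F_t_lt {α : ℝ} (hα : α ∈ Set.Ioo (0:ℝ) 1) (θ : ℝ) : F K θ (t α θ) < volume K := by
  rw [tF ht hα θ]
  calc ENNReal.ofReal α * volume K < 1 * volume K := by
        rw [ENNReal.mul_lt_mul_iff_left (ne_of_gt (muK_pos hK_int)) (ne_of_lt (muK_fin hK_compact))]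
        exact ENNReal.ofReal_lt_one.2 hα.2
    _ = volume K := one_mul _

include hK_compact hK_conv hK_int in
lemma eq_of_F_eq (θ : ℝ) {a b : ℝ} (hab : F K θ a = F K θ b)
    (h0 : 0 < F K θ a) (h1 : F K θ a < volume K) : a = b := by
  rcases lt_trichotomy a b with h | h | h
  · exact absurd hab (ne_of_lt (F_lt hK_compact hK_conv hK_int θ h h0 (hab ▸ h1)))
  · exact h
  · exact absurd hab.symm (ne_of_lt (F_lt hK_compact hK_conv hK_int θ h (hab ▸ h0) h1))

include hK_compact hK_int ht in
lemma t_lt_t {α α' : ℝ} (hα : α ∈ Set.Ioo (0:ℝ) 1) (hα' : α' ∈ Set.Ioo (0:ℝ) 1)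
    (h : α < α') (θ : ℝ) : t α θ < t α' θ := by
  by_contra h'
  push_neg at h'
  have h2 : F K θ (t α' θ) ≤ F K θ (t α θ) := F_mono θ h'
  rw [tF ht hα θ, tF ht hα' θ] at h2
  have h3 : ENNReal.ofReal α * volume K < ENNReal.ofReal α' * volume K := by
    rw [ENNReal.mul_lt_mul_iff_left (ne_of_gt (muK_pos hK_int)) (ne_of_lt (muK_fin hK_compact))]
    exact (ENNReal.ofReal_lt_ofReal_iff (lt_trans hα.1 h)).2 h
  exact absurd h2 (not_le.2 h3)

include hK_compact hK_conv hK_int ht in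
lemma t_congr {α : ℝ} (hα : α ∈ Set.Ioo (0:ℝ) 1) {θ₁ θ₂ : ℝ} (h : uperp θ₁ = uperp θ₂) :
    t α θ₁ = t α θ₂ := by
  have hF : ∀ s, F K θ₁ s = F K θ₂ s := fun s => by rw [F, F, h]
  have h1 : F K θ₁ (t α θ₁) = F K θ₁ (t α θ₂) := by
    rw [hF (t α θ₂), tF ht hα θ₁, tF ht hα θ₂]
  exact eq_of_F_eq hK_compact hK_conv hK_int θ₁ h1 (F_t_pos hK_int ht hα θ₁)
    (F_t_lt hK_compact hK_int ht hα θ₁)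

include hK_compact hK_conv hK_int ht in
lemma t_periodic {α : ℝ} (hα : α ∈ Set.Ioo (0:ℝ) 1) (θ : ℝ) (k : ℤ) :
    t α (θ + k * (2 * Real.pi)) = t α θ :=
  t_congr hK_compact hK_conv hK_int ht hα (uperp_add_int_two_pi θ k)

include hK_compact hK_conv hK_int ht in
lemma t_flip {α : ℝ} (hα : α ∈ Set.Ioo (0:ℝ) 1) (θ : ℝ) :
    t (1-α) θ = - t α (θ + Real.pi) := by
  have h1a : (1 - α) ∈ Set.Ioo (0:ℝ) 1 := ⟨by linarith [hα.2], by linarith [hα.1]⟩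
  have hKm : MeasurableSet K := hK_compact.isClosed.measurableSet
  have h1 := flipF hKm θ (t α (θ + Real.pi))
  rw [tF ht hα (θ + Real.pi)] at h1
  have h2 : ENNReal.ofReal α * volume K + ENNReal.ofReal (1 - α) * volume K = volume K := by
    rw [← add_mul, ← ENNReal.ofReal_add (le_of_lt hα.1) (by linarith [hα.2])]
    norm_num
  have h3 : F K θ (-t α (θ + Real.pi)) = ENNReal.ofReal (1-α) * volume K := by
    have hne : ENNReal.ofReal α * volume K ≠ ⊤ :=
      ne_top_of_le_ne_top (ne_of_lt (muK_fin hK_compact)) (by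
        calc ENNReal.ofReal α * volume K ≤ 1 * volume K := by
              apply mul_le_mul_left
              exact le_of_lt (ENNReal.ofReal_lt_one.2 hα.2)
          _ = volume K := one_mul _)
    exact (ENNReal.add_right_inj hne).1 (h1.trans h2.symm)
  have h4 : F K θ (t (1-α) θ) = F K θ (-t α (θ + Real.pi)) := by
    rw [tF ht h1a θ, h3]
  exact eq_of_F_eq hK_compact hK_conv hK_int θ h4 (F_t_pos hK_int ht h1a θ)
    (F_t_lt hK_compact hK_int ht h1a θ)

end TLem

noncomputable def core (t : ℝ → ℝ → ℝ) (α : ℝ) : Set E2 :=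
  ⋂ θ : ℝ, {x : E2 | t α θ ≤ ⟪x, uperp θ⟫}

section CoreL
variable {K : Set E2} {t : ℝ → ℝ → ℝ}
variable (hK_compact : IsCompact K) (hK_conv : Convex ℝ K) (hK_int : (interior K).Nonempty)
variable (ht : ∀ α ∈ Set.Ioo (0:ℝ) 1, ∀ θ : ℝ,
      volume (K ∩ {x | ⟪x, uperp θ⟫ ≤ t α θ}) = ENNReal.ofReal α * volume K)

lemma mem_core {α : ℝ} {x : E2} : x ∈ core t α ↔ ∀ θ, t α θ ≤ ⟪x, uperp θ⟫ := by
  simp [core, Set.mem_iInter, Set.mem_setOf_eq]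

lemma core_closed (α : ℝ) : IsClosed (core t α) :=
  isClosed_iInter fun θ => isClosed_le continuous_const (cont_inner_uperp θ)

include hK_compact hK_int ht in
lemma core_mono {α α' : ℝ} (hα : α ∈ Set.Ioo (0:ℝ) 1) (hα' : α' ∈ Set.Ioo (0:ℝ) 1)
    (h : α ≤ α') : core t α' ⊆ core t α := by
  intro x hx
  rw [mem_core] at hx ⊢
  intro θ
  rcases eq_or_lt_of_le h with rfl | hlt
  · exact hx θ
  · exact le_trans (le_of_lt (t_lt_t hK_compact hK_int ht hα hα' hlt θ)) (hx θ)

include hK_compact hK_conv hK_int ht in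
lemma core_subset_K {α : ℝ} (hα : α ∈ Set.Ioo (0:ℝ) 1) : core t α ⊆ K := by
  intro x hx
  by_contra hxK
  obtain ⟨f, u, hfx, hfK⟩ :=
    geometric_hahn_banach_point_closed hK_conv hK_compact.isClosed hxK
  set v := (InnerProductSpace.toDual ℝ E2).symm f with hv
  have hinner : ∀ y, ⟪v, y⟫ = f y := fun y => InnerProductSpace.toDual_symm_apply
  have hvne : v ≠ 0 := by
    intro h0
    obtain ⟨y0, r0, hr0, hball⟩ := interior_ball hK_int
    have hy0 : y0 ∈ K := hball (Metric.mem_ball_self hr0)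
    have h1 := hfK y0 hy0
    have h2 : f y0 = 0 := by rw [← hinner, h0, inner_zero_left]
    have h3 : f x = 0 := by rw [← hinner, h0, inner_zero_left]
    rw [h2] at h1; rw [h3] at hfx; linarith
  set u₀ := ‖v‖⁻¹ • v with hu₀
  have hnv : 0 < ‖v‖ := norm_pos_iff.2 hvne
  have hu₀n : ‖u₀‖ = 1 := by
    rw [hu₀, norm_smul, norm_inv, norm_norm, inv_mul_cancel₀ (ne_of_gt hnv)]
  obtain ⟨θ, hθ⟩ := exists_uperp_eq u₀ hu₀n
  have hlev : ∀ y, ⟪y, uperp θ⟫ = ‖v‖⁻¹ * f y := by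
    intro y
    rw [hθ, hu₀, real_inner_comm, real_inner_smul_left, hinner]
  -- every point of K is strictly above x's level
  have hKempty : K ∩ {y : E2 | ⟪y, uperp θ⟫ ≤ ⟪x, uperp θ⟫} = ∅ := by
    ext y
    simp only [Set.mem_inter_iff, Set.mem_setOf_eq, Set.mem_empty_iff_false, iff_false,
      not_and, not_le]
    intro hyK
    rw [hlev y, hlev x]
    have := hfK y hyK
    have h4 : f x < f y := lt_trans hfx this
    exact mul_lt_mul_of_pos_left h4 (inv_pos.2 hnv)
  have hF0 : F K θ (⟪x, uperp θ⟫) = 0 := by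
    rw [F, hKempty, measure_empty]
  have h5 : F K θ (t α θ) ≤ F K θ (⟪x, uperp θ⟫) := F_mono θ (mem_core.1 hx θ)
  rw [hF0] at h5
  exact absurd (le_antisymm h5 zero_le) (ne_of_gt (F_t_pos hK_int ht hα θ))

include hK_compact hK_conv hK_int ht in
lemma core_compact {α : ℝ} (hα : α ∈ Set.Ioo (0:ℝ) 1) : IsCompact (core t α) :=
  IsCompact.of_isClosed_subset hK_compact (core_closed α)
    (core_subset_K hK_compact hK_conv hK_int ht hα)

include hK_compact hK_int ht in
lemma core_small :
    ∃ α₁ ∈ Set.Ioo (0:ℝ) (1/2), ∃ x₀ r, 0 < r ∧ Metric.ball x₀ r ⊆ core t α₁ := by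
  obtain ⟨y, r4, hr4, hball4⟩ := interior_ball hK_int
  set r := r4 / 4 with hr'
  have hr : 0 < r := by positivity
  have hball : Metric.ball y (2*r) ⊆ K := by
    apply Set.Subset.trans _ hball4
    apply Metric.ball_subset_ball
    rw [hr']; linarith
  set V₀ := volume (Metric.ball (0:E2) (r/2)) with hV₀
  have hV₀pos : 0 < V₀ := Metric.measure_ball_pos volume _ (by positivity)
  have hV₀fin : V₀ < ⊤ := measure_ball_lt_top
  set vK := (volume K).toReal with hvK
  have hvKpos : 0 < vK := ENNReal.toReal_pos (ne_of_gt (muK_pos hK_int))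
    (ne_of_lt (muK_fin hK_compact))
  set α₁ := min (1/4 : ℝ) (V₀.toReal / (2 * vK)) with hα₁
  have hV₀tpos : 0 < V₀.toReal := ENNReal.toReal_pos (ne_of_gt hV₀pos) (ne_of_lt hV₀fin)
  have hα₁pos : 0 < α₁ := lt_min (by norm_num) (by positivity)
  have hα₁lt : α₁ ∈ Set.Ioo (0:ℝ) (1/2) :=
    ⟨hα₁pos, lt_of_le_of_lt (min_le_left _ _) (by norm_num)⟩
  have hα₁Ioo : α₁ ∈ Set.Ioo (0:ℝ) 1 := ⟨hα₁pos, lt_trans hα₁lt.2 (by norm_num)⟩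
  have hsmall : ENNReal.ofReal α₁ * volume K < V₀ := by
    calc ENNReal.ofReal α₁ * volume K ≤ ENNReal.ofReal (V₀.toReal / (2*vK)) * volume K :=
          mul_le_mul_left (ENNReal.ofReal_le_ofReal (min_le_right _ _)) _
      _ = ENNReal.ofReal (V₀.toReal / (2*vK)) * ENNReal.ofReal vK := by
          rw [hvK, ENNReal.ofReal_toReal (ne_of_lt (muK_fin hK_compact))]
      _ = ENNReal.ofReal (V₀.toReal / (2*vK) * vK) := by
          rw [← ENNReal.ofReal_mul (by positivity)]
      _ = ENNReal.ofReal (V₀.toReal / 2) := by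
          congr 1
          field_simp
      _ < ENNReal.ofReal V₀.toReal := (ENNReal.ofReal_lt_ofReal_iff hV₀tpos).2 (by linarith)
      _ = V₀ := ENNReal.ofReal_toReal (ne_of_lt hV₀fin)
  have hkey : ∀ θ, t α₁ θ ≤ ⟪y, uperp θ⟫ - r := by
    intro θ
    by_contra hcon
    push_neg at hcon
    have huu : ⟪uperp θ, uperp θ⟫ = (1:ℝ) := by
      have := norm_uperp θ
      rw [real_inner_self_eq_norm_sq, this]; norm_num
    set ctr := y - (3*r/2) • uperp θ with hctr
    have hctrl : ⟪ctr, uperp θ⟫ = ⟪y, uperp θ⟫ - 3*r/2 := by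
      rw [hctr, inner_sub_left, real_inner_smul_left, huu, mul_one]
    have hsubball : Metric.ball ctr (r/2) ⊆ K ∩ {x : E2 | ⟪x, uperp θ⟫ ≤ ⟪y, uperp θ⟫ - r} := by
      intro w hw
      constructor
      · apply hball
        rw [Metric.mem_ball, dist_eq_norm] at hw ⊢
        have h6 : ‖w - y‖ ≤ ‖w - ctr‖ + ‖ctr - y‖ := by
          have : w - y = (w - ctr) + (ctr - y) := by abel
          rw [this]; exact norm_add_le _ _
        have h7 : ‖ctr - y‖ = 3*r/2 := by
          rw [hctr]
          have : y - (3*r/2) • uperp θ - y = -((3*r/2) • uperp θ) := by abel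
          rw [this, norm_neg, norm_smul, Real.norm_eq_abs, abs_of_pos (by positivity),
            norm_uperp, mul_one]
        have h8 : ‖w - ctr‖ < r/2 := hw
        calc ‖w - y‖ ≤ ‖w - ctr‖ + 3*r/2 := by rw [← h7]; exact h6
          _ < r/2 + 3*r/2 := by linarith
          _ = 2*r := by ring
      · rw [Set.mem_setOf_eq]
        have h9 := inner_le_of_mem_ball hw θ
        rw [hctrl] at h9
        rw [abs_le] at h9
        linarith [h9.2]
    have hVle : V₀ ≤ F K θ (⟪y, uperp θ⟫ - r) := by
      rw [hV₀]
      calc volume (Metric.ball (0:E2) (r/2)) = volume (Metric.ball ctr (r/2)) :=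
            (Measure.addHaar_ball_center volume ctr (r/2)).symm
        _ ≤ F K θ (⟪y, uperp θ⟫ - r) := measure_mono hsubball
    have hle2 : F K θ (⟪y, uperp θ⟫ - r) ≤ F K θ (t α₁ θ) := F_mono θ (le_of_lt hcon)
    rw [tF ht hα₁Ioo θ] at hle2
    exact absurd (lt_of_le_of_lt (le_trans hVle hle2) hsmall) (lt_irrefl _)
  refine ⟨α₁, hα₁lt, y, r, hr, ?_⟩
  intro x hx
  rw [mem_core]
  intro θ
  have h10 := inner_le_of_mem_ball hx θ
  rw [abs_le] at h10
  have := hkey θ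
  linarith [h10.1]

end CoreL

section ExpL
variable {K : Set E2} {t : ℝ → ℝ → ℝ}
variable (hK_compact : IsCompact K) (hK_conv : Convex ℝ K) (hK_int : (interior K).Nonempty)
variable (ht : ∀ α ∈ Set.Ioo (0:ℝ) 1, ∀ θ : ℝ,
      volume (K ∩ {x | ⟪x, uperp θ⟫ ≤ t α θ}) = ENNReal.ofReal α * volume K)

include hK_compact hK_conv hK_int ht in
/-- If the α-core contains a ball, then for slightly larger β the core still has
nonempty interior. -/
lemma core_expand {α : ℝ} (hα : α ∈ Set.Ioo (0:ℝ) 1) {z : E2} {ρ : ℝ} (hρ : 0 < ρ)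
    (hzball : Metric.ball z ρ ⊆ core t α) :
    ∃ ε > 0, ∀ β ∈ Set.Ioo (0:ℝ) 1, α < β → β ≤ α + ε →
      (interior (core t β)).Nonempty := by
  have hKm : MeasurableSet K := hK_compact.isClosed.measurableSet
  -- a bound R for the levels of K
  obtain ⟨R0, hR0⟩ := hK_compact.isBounded.subset_closedBall 0
  set R := |R0| + 1 with hR'
  have hR : 0 < R := by positivity
  have hlev : ∀ θ, ∀ x ∈ K, |⟪x, uperp θ⟫| ≤ R := by
    intro θ x hx
    calc |⟪x, uperp θ⟫| ≤ ‖x‖ * ‖uperp θ‖ := abs_real_inner_le_norm _ _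
      _ = ‖x‖ := by rw [norm_uperp, mul_one]
      _ ≤ R0 := by simpa [Metric.mem_closedBall, dist_zero_right] using hR0 hx
      _ ≤ R := by rw [hR']; linarith [le_abs_self R0]
  -- ball is in K
  have hzK : Metric.ball z ρ ⊆ K :=
    hzball.trans (core_subset_K hK_compact hK_conv hK_int ht hα)
  -- z is at height ≥ t α θ + ρ
  have hzlev : ∀ θ, t α θ + ρ ≤ ⟪z, uperp θ⟫ := by
    intro θ
    have hz0 : z ∈ core t α := hzball (Metric.mem_ball_self hρ)
    have hz0' : t α θ ≤ ⟪z, uperp θ⟫ := mem_core.1 hz0 θ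
    by_contra hcon
    push_neg at hcon
    set ρ' := (⟪z, uperp θ⟫ - t α θ + ρ) / 2 with hρ''
    have hρ'0 : 0 ≤ ρ' := by rw [hρ'']; linarith
    have hρ'lt : ρ' < ρ := by rw [hρ'']; linarith
    have hmem : z - ρ' • uperp θ ∈ Metric.ball z ρ := by
      rw [Metric.mem_ball, dist_eq_norm]
      have : z - ρ' • uperp θ - z = -(ρ' • uperp θ) := by abel
      rw [this, norm_neg, norm_smul, Real.norm_eq_abs, abs_of_nonneg hρ'0, norm_uperp, mul_one]
      exact hρ'lt
    have huu : ⟪uperp θ, uperp θ⟫ = (1:ℝ) := by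
      have := norm_uperp θ
      rw [real_inner_self_eq_norm_sq, this]; norm_num
    have h1 : t α θ ≤ ⟪z - ρ' • uperp θ, uperp θ⟫ := mem_core.1 (hzball hmem) θ
    rw [inner_sub_left, real_inner_smul_left, huu, mul_one] at h1
    rw [hρ''] at h1
    linarith
  -- radius of small interior balls in slabs
  set r' := min (ρ*ρ/(16*R)) (ρ/8) with hr''
  have hr'0 : 0 < r' := lt_min (by positivity) (by positivity)
  set V₁ := volume (Metric.ball (0:E2) r') with hV₁
  have hV₁pos : 0 < V₁ := Metric.measure_ball_pos volume _ hr'0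
  have hV₁fin : V₁ < ⊤ := measure_ball_lt_top
  set vK := (volume K).toReal with hvK
  have hvKpos : 0 < vK := ENNReal.toReal_pos (ne_of_gt (muK_pos hK_int))
    (ne_of_lt (muK_fin hK_compact))
  have hV₁tpos : 0 < V₁.toReal := ENNReal.toReal_pos (ne_of_gt hV₁pos) (ne_of_lt hV₁fin)
  set ε := min 1 (V₁.toReal / (2 * vK)) with hε
  have hεpos : 0 < ε := lt_min (by norm_num) (by positivity)
  have hsmall : ENNReal.ofReal ε * volume K < V₁ := by
    calc ENNReal.ofReal ε * volume K ≤ ENNReal.ofReal (V₁.toReal / (2*vK)) * volume K :=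
          mul_le_mul_left (ENNReal.ofReal_le_ofReal (min_le_right _ _)) _
      _ = ENNReal.ofReal (V₁.toReal / (2*vK)) * ENNReal.ofReal vK := by
          rw [hvK, ENNReal.ofReal_toReal (ne_of_lt (muK_fin hK_compact))]
      _ = ENNReal.ofReal (V₁.toReal / (2*vK) * vK) := by
          rw [← ENNReal.ofReal_mul (by positivity)]
      _ = ENNReal.ofReal (V₁.toReal / 2) := by
          congr 1
          field_simp
      _ < ENNReal.ofReal V₁.toReal := (ENNReal.ofReal_lt_ofReal_iff hV₁tpos).2 (by linarith)
      _ = V₁ := ENNReal.ofReal_toReal (ne_of_lt hV₁fin)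
  refine ⟨ε, hεpos, ?_⟩
  intro β hβ hβ1 hβ2
  -- show t β θ ≤ t α θ + ρ/2 for all θ
  have hkey : ∀ θ, t β θ ≤ t α θ + ρ/2 := by
    intro θ
    -- a point of K strictly below t α θ
    have hqex : ∃ q ∈ K, ⟪q, uperp θ⟫ < t α θ := by
      have h1' : 0 < volume (K ∩ {x : E2 | ⟪x, uperp θ⟫ < t α θ}) := by
        rw [lt_eq_le θ (t α θ)]
        exact F_t_pos hK_int ht hα θ
      obtain ⟨x, hx⟩ := nonempty_of_measure_ne_zero (ne_of_gt h1')
      exact ⟨x, hx.1, hx.2⟩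
    obtain ⟨q, hqK, hql⟩ := hqex
    set lq := ⟪q, uperp θ⟫ with hlq
    set lz := ⟪z, uperp θ⟫ with hlz
    have hzlev' := hzlev θ
    have hlql : lq < t α θ := hql
    have hlzgt : t α θ + ρ ≤ lz := hzlev'
    have hlqR : |lq| ≤ R := hlev θ q hqK
    have hlzR : |lz| ≤ R := hlev θ z (hzK (Metric.mem_ball_self hρ))
    have hdenpos : 0 < lz - lq := by linarith
    have hdenle : lz - lq ≤ 2*R := by
      rw [abs_le] at hlqR hlzR
      linarith [hlqR.1, hlzR.2]
    set μ := (t α θ + ρ/4 - lq) / (lz - lq) with hμ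
    have hnum : ρ/4 < t α θ + ρ/4 - lq := by linarith
    have hμ0 : 0 < μ := div_pos (by linarith) hdenpos
    have hμ1 : μ < 1 := (div_lt_one hdenpos).2 (by linarith)
    set p := (1-μ) • q + μ • z with hp
    have hplev : ⟪p, uperp θ⟫ = t α θ + ρ/4 := by
      rw [hp, inner_combo, ← hlq, ← hlz]
      have : μ * (lz - lq) = t α θ + ρ/4 - lq := by
        rw [hμ, div_mul_cancel₀ _ (ne_of_gt hdenpos)]
      linarith [this]
    have hμρ : r' ≤ μ * ρ := by
      have h2 : (ρ/4) / (2*R) ≤ μ := by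
        rw [hμ]
        exact div_le_div₀ (by linarith) (le_of_lt hnum) hdenpos hdenle
      have h2b : ((ρ/4) / (2*R)) * ρ = ρ*ρ/(8*R) := by field_simp; ring
      calc r' ≤ ρ*ρ/(16*R) := min_le_left _ _
        _ ≤ ρ*ρ/(8*R) := by
            apply div_le_div_of_nonneg_left (by positivity) (by positivity) (by linarith)
        _ = ((ρ/4) / (2*R)) * ρ := h2b.symm
        _ ≤ μ * ρ := mul_le_mul_of_nonneg_right h2 (le_of_lt hρ)
    -- ball p r' is inside K and inside open slab (t α θ, t α θ + ρ/2)
    have hpball : Metric.ball p r' ⊆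
        K ∩ {x : E2 | t α θ < ⟪x, uperp θ⟫} ∩ {x : E2 | ⟪x, uperp θ⟫ ≤ t α θ + ρ/2} := by
      intro w hw
      have hwlev := inner_le_of_mem_ball hw θ
      rw [hplev, abs_le] at hwlev
      have hr'b : r' ≤ ρ/8 := min_le_right _ _
      have hwK : w ∈ K := by
        have key : (1 - μ) • q + μ • (z + μ⁻¹ • (w - p)) = w := by
          have h9 : μ • μ⁻¹ • (w - p) = w - p := smul_inv_smul₀ (ne_of_gt hμ0) _
          rw [smul_add μ, h9, hp]
          abel
        rw [← key]
        apply hK_conv hqK _ (by linarith) (le_of_lt hμ0) (by ring)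
        apply hzK
        rw [Metric.mem_ball, dist_eq_norm, add_sub_cancel_left, norm_smul, Real.norm_eq_abs,
          abs_inv, abs_of_pos hμ0, inv_mul_lt_iff₀ hμ0]
        rw [Metric.mem_ball, dist_eq_norm] at hw
        exact lt_of_lt_of_le hw hμρ
      refine ⟨⟨hwK, ?_⟩, ?_⟩ <;> rw [Set.mem_setOf_eq] <;> [linarith [hwlev.1]; linarith [hwlev.2]]
    -- measure bound
    have hdisj : Disjoint (K ∩ {x : E2 | ⟪x, uperp θ⟫ ≤ t α θ}) (Metric.ball p r') := by
      apply Set.disjoint_left.2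
      rintro x ⟨_, hx1⟩ hx2
      obtain ⟨⟨_, hx3⟩, _⟩ := hpball hx2
      rw [Set.mem_setOf_eq] at hx1 hx3
      linarith
    have hFbig : F K θ (t α θ) + V₁ ≤ F K θ (t α θ + ρ/2) := by
      calc F K θ (t α θ) + V₁
          = F K θ (t α θ) + volume (Metric.ball p r') := by
            rw [hV₁, Measure.addHaar_ball_center volume p r']
        _ = volume ((K ∩ {x : E2 | ⟪x, uperp θ⟫ ≤ t α θ}) ∪ Metric.ball p r') :=
            (measure_union hdisj measurableSet_ball).symm
        _ ≤ F K θ (t α θ + ρ/2) := by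
            apply measure_mono
            rintro x (⟨hxK, hx⟩ | hx)
            · rw [Set.mem_setOf_eq] at hx
              exact ⟨hxK, by rw [Set.mem_setOf_eq]; linarith⟩
            · obtain ⟨⟨hxK, _⟩, hx2⟩ := hpball hx
              rw [Set.mem_setOf_eq] at hx2
              exact ⟨hxK, by rw [Set.mem_setOf_eq]; exact hx2⟩
    by_contra hcon
    push_neg at hcon
    have h11 : F K θ (t α θ + ρ/2) ≤ F K θ (t β θ) := F_mono θ (le_of_lt hcon)
    rw [tF ht hβ θ] at h11
    have h12 : ENNReal.ofReal β * volume K < F K θ (t α θ) + V₁ := by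
      calc ENNReal.ofReal β * volume K ≤ ENNReal.ofReal (α + ε) * volume K :=
            mul_le_mul_left (ENNReal.ofReal_le_ofReal hβ2) _
        _ = (ENNReal.ofReal α + ENNReal.ofReal ε) * volume K := by
            rw [ENNReal.ofReal_add (le_of_lt hα.1) (le_of_lt hεpos)]
        _ = ENNReal.ofReal α * volume K + ENNReal.ofReal ε * volume K := by rw [add_mul]
        _ < ENNReal.ofReal α * volume K + V₁ := by
            apply ENNReal.add_lt_add_left _ hsmall
            exact ne_top_of_le_ne_top (ne_of_lt (muK_fin hK_compact))
              (by calc ENNReal.ofReal α * volume K ≤ 1 * volume K :=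
                    mul_le_mul_left (le_of_lt (ENNReal.ofReal_lt_one.2 hα.2)) _
                  _ = volume K := one_mul _)
        _ = F K θ (t α θ) + V₁ := by rw [tF ht hα θ]
    exact absurd (le_trans hFbig h11) (not_le.2 h12)
  -- conclude: ball z (ρ/4) ⊆ core t β
  have hfinal : Metric.ball z (ρ/4) ⊆ core t β := by
    intro x hx
    rw [mem_core]
    intro θ
    have h13 := inner_le_of_mem_ball hx θ
    rw [abs_le] at h13
    have h14 := hzlev θ
    have h15 := hkey θ
    linarith [h13.1]
  exact ⟨z, interior_maximal hfinal Metric.isOpen_ball (Metric.mem_ball_self (by positivity))⟩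

end ExpL

section TT
variable {K : Set E2} {t : ℝ → ℝ → ℝ}
variable (hK_compact : IsCompact K) (hK_conv : Convex ℝ K) (hK_int : (interior K).Nonempty)
variable (ht : ∀ α ∈ Set.Ioo (0:ℝ) 1, ∀ θ : ℝ,
      volume (K ∩ {x | ⟪x, uperp θ⟫ ≤ t α θ}) = ENNReal.ofReal α * volume K)

include hK_compact hK_conv hK_int ht in
lemma t_tendsto {g : ℕ → ℝ} (hg : ∀ n, g n ∈ Set.Ioo (0:ℝ) 1) (hmono : StrictMono g)
    {αs : ℝ} (hαs : αs ∈ Set.Ioo (0:ℝ) 1) (hlim : Tendsto g atTop (𝓝 αs)) (θ : ℝ) :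
    Tendsto (fun n => t (g n) θ) atTop (𝓝 (t αs θ)) := by
  have hKm : MeasurableSet K := hK_compact.isClosed.measurableSet
  have hglt : ∀ n, g n < αs := by
    intro n
    exact lt_of_lt_of_le (hmono (Nat.lt_succ_self n)) (hmono.monotone.ge_of_tendsto hlim (n+1))
  have htlt : ∀ n, t (g n) θ < t αs θ := fun n =>
    t_lt_t hK_compact hK_int ht (hg n) hαs (hglt n) θ
  have htmono : Monotone fun n => t (g n) θ := fun m n hmn => by
    rcases eq_or_lt_of_le hmn with rfl | h
    · exact le_refl _
    · exact le_of_lt (t_lt_t hK_compact hK_int ht (hg m) (hg n) (hmono h) θ)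
  have hbdd : BddAbove (Set.range fun n => t (g n) θ) := by
    refine ⟨t αs θ, ?_⟩
    rintro x ⟨n, rfl⟩
    exact le_of_lt (htlt n)
  set L := ⨆ n, t (g n) θ with hL
  have htendL : Tendsto (fun n => t (g n) θ) atTop (𝓝 L) :=
    tendsto_atTop_ciSup htmono hbdd
  have hLle : L ≤ t αs θ := ciSup_le fun n => le_of_lt (htlt n)
  -- show L = t αs θ via measures
  have hunion : K ∩ {x : E2 | ⟪x, uperp θ⟫ < L} = ⋃ n, K ∩ {x : E2 | ⟪x, uperp θ⟫ ≤ t (g n) θ} := by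
    ext x
    simp only [Set.mem_inter_iff, Set.mem_setOf_eq, Set.mem_iUnion]
    constructor
    · rintro ⟨hxK, hx⟩
      rw [hL, lt_ciSup_iff hbdd] at hx
      obtain ⟨n, hn⟩ := hx
      exact ⟨n, hxK, le_of_lt hn⟩
    · rintro ⟨n, hxK, hx⟩
      refine ⟨hxK, lt_of_le_of_lt hx ?_⟩
      calc t (g n) θ < t (g (n+1)) θ :=
            t_lt_t hK_compact hK_int ht (hg n) (hg (n+1)) (hmono (Nat.lt_succ_self n)) θ
        _ ≤ L := le_ciSup hbdd (n+1)
  have hFL : F K θ L = ENNReal.ofReal αs * volume K := by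
    rw [← lt_eq_le θ L, hunion]
    rw [Directed.measure_iUnion]
    · have h1 : ∀ n, volume (K ∩ {x : E2 | ⟪x, uperp θ⟫ ≤ t (g n) θ}) =
          ENNReal.ofReal (g n) * volume K := fun n => ht (g n) (hg n) θ
      simp_rw [h1]
      -- iSup of the monotone sequence equals the limit
      have h2 : Tendsto (fun n => ENNReal.ofReal (g n) * volume K) atTop
          (𝓝 (ENNReal.ofReal αs * volume K)) := by
        apply ENNReal.Tendsto.mul_const (ENNReal.tendsto_ofReal hlim)
        exact Or.inr (ne_of_lt (muK_fin hK_compact))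
      have h3 : Monotone fun n => ENNReal.ofReal (g n) * volume K := fun m n hmn =>
        mul_le_mul_left (ENNReal.ofReal_le_ofReal (hmono.monotone hmn)) _
      exact tendsto_nhds_unique (tendsto_atTop_iSup h3) h2
    · intro m n
      rcases le_total m n with h | h
      · exact ⟨n, fun x hx => ⟨hx.1, le_trans hx.2 (by exact_mod_cast htmono h)⟩,
          fun x hx => hx⟩
      · exact ⟨m, fun x hx => hx,
          fun x hx => ⟨hx.1, le_trans hx.2 (by exact_mod_cast htmono h)⟩⟩
  have hFeq : F K θ L = F K θ (t αs θ) := by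
    rw [hFL, tF ht hαs θ]
  have hLeq : L = t αs θ := by
    apply eq_of_F_eq hK_compact hK_conv hK_int θ hFeq
    · rw [hFL]
      exact ENNReal.mul_pos (by simp [ENNReal.ofReal_eq_zero, not_le, hαs.1])
        (ne_of_gt (muK_pos hK_int))
    · rw [hFL]
      calc ENNReal.ofReal αs * volume K < 1 * volume K := by
            rw [ENNReal.mul_lt_mul_iff_left (ne_of_gt (muK_pos hK_int))
              (ne_of_lt (muK_fin hK_compact))]
            exact ENNReal.ofReal_lt_one.2 hαs.2
        _ = volume K := one_mul _
  rw [← hLeq]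
  exact htendL

end TT

section MM
variable {K : Set E2} {t : ℝ → ℝ → ℝ} {b c : ℝ → ℝ → E2} {vl vr : ℝ → ℝ → ℝ}
variable (hK_compact : IsCompact K) (hK_conv : Convex ℝ K) (hK_int : (interior K).Nonempty)
variable (ht : ∀ α ∈ Set.Ioo (0:ℝ) 1, ∀ θ : ℝ,
      volume (K ∩ {x | ⟪x, uperp θ⟫ ≤ t α θ}) = ENNReal.ofReal α * volume K)
variable (hchord : ∀ α ∈ Set.Ioo (0:ℝ) 1, ∀ θ : ℝ,
      K ∩ {x | ⟪x, uperp θ⟫ = t α θ} = segment ℝ (b α θ) (c α θ))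
variable (hvl : ∀ α ∈ Set.Ioo (0:ℝ) 1, ∀ θ₀ : ℝ,
      HasDerivWithinAt (fun θ => (2⁻¹ : ℝ) • (b α θ + c α θ))
        (vl α θ₀ • uvec θ₀) (Set.Iic θ₀) θ₀)
variable (hvr : ∀ α ∈ Set.Ioo (0:ℝ) 1, ∀ θ₀ : ℝ,
      HasDerivWithinAt (fun θ => (2⁻¹ : ℝ) • (b α θ + c α θ))
        (vr α θ₀ • uvec θ₀) (Set.Ici θ₀) θ₀)

include hchord in
lemma mid_lev {α : ℝ} (hα : α ∈ Set.Ioo (0:ℝ) 1) (θ : ℝ) :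
    ⟪(2⁻¹ : ℝ) • (b α θ + c α θ), uperp θ⟫ = t α θ := by
  have hb : b α θ ∈ K ∩ {x | ⟪x, uperp θ⟫ = t α θ} := by
    rw [hchord α hα θ]; exact left_mem_segment ℝ _ _
  have hc : c α θ ∈ K ∩ {x | ⟪x, uperp θ⟫ = t α θ} := by
    rw [hchord α hα θ]; exact right_mem_segment ℝ _ _
  have hbl : ⟪b α θ, uperp θ⟫ = t α θ := hb.2
  have hcl : ⟪c α θ, uperp θ⟫ = t α θ := hc.2
  rw [real_inner_smul_left, inner_add_left, hbl, hcl]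
  ring

include hvl hvr in
lemma mid_cont {α : ℝ} (hα : α ∈ Set.Ioo (0:ℝ) 1) :
    Continuous (fun θ => (2⁻¹ : ℝ) • (b α θ + c α θ)) := by
  rw [continuous_iff_continuousAt]
  intro θ₀
  have h1 : ContinuousWithinAt (fun θ => (2⁻¹ : ℝ) • (b α θ + c α θ)) (Set.Iic θ₀) θ₀ :=
    (hvl α hα θ₀).continuousWithinAt
  have h2 : ContinuousWithinAt (fun θ => (2⁻¹ : ℝ) • (b α θ + c α θ)) (Set.Ici θ₀) θ₀ :=
    (hvr α hα θ₀).continuousWithinAt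
  have h3 := h1.union h2
  rwa [Set.Iic_union_Ici, continuousWithinAt_univ] at h3

include hvr in
lemma g_deriv {α : ℝ} (hα : α ∈ Set.Ioo (0:ℝ) 1) (θc x : ℝ) :
    HasDerivWithinAt (fun θ => ⟪(2⁻¹ : ℝ) • (b α θ + c α θ), uperp θc⟫)
      (vr α x * Real.sin (x - θc)) (Set.Ici x) x := by
  have h1 := (hvr α hα x).inner ℝ (hasDerivWithinAt_const x (Set.Ici x) (uperp θc))
  have h2 : ⟪(2⁻¹ : ℝ) • (b α x + c α x), (0:E2)⟫ + ⟪vr α x • uvec x, uperp θc⟫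
      = vr α x * Real.sin (x - θc) := by
    rw [inner_zero_right, real_inner_smul_left, inner_uvec_uperp, zero_add]
  rwa [h2] at h1

include hK_compact hK_conv hK_int ht hchord hvl hvr in
/-- If both one-sided velocities are nonnegative at level α, then every chord midpoint
belongs to the α-core. -/
lemma mid_mem_core {α : ℝ} (hα : α ∈ Set.Ioo (0:ℝ) 1)
    (hV : ∀ θ, 0 ≤ vr α θ) (θ₀ : ℝ) :
    (2⁻¹ : ℝ) • (b α θ₀ + c α θ₀) ∈ core t α := by
  set m : ℝ → E2 := fun θ => (2⁻¹ : ℝ) • (b α θ + c α θ) with hm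
  have hcont : Continuous m := mid_cont hvl hvr hα
  have hπ : (0:ℝ) < Real.pi := Real.pi_pos
  -- monotonicity to the right of θc on [θc, θc + π]
  have hup : ∀ θc x, θc ≤ x → x ≤ θc + Real.pi → t α θc ≤ ⟪m x, uperp θc⟫ := by
    intro θc x hx1 hx2
    have key := image_le_of_deriv_right_le_deriv_boundary
        (f := fun y => -⟪m y, uperp θc⟫) (a := θc) (b := x)
        (f' := fun y => -(vr α y * Real.sin (y - θc)))
        (B := fun _ => -⟪m θc, uperp θc⟫) (B' := fun _ => 0)
        (((hcont.inner continuous_const).neg).continuousOn)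
        (fun y _ => (g_deriv hvr hα θc y).neg)
        (le_refl _)
        continuousOn_const
        (fun y _ => hasDerivWithinAt_const _ _ _)
        (by
          intro y hy
          simp only [neg_nonpos]
          apply mul_nonneg (hV y)
          apply Real.sin_nonneg_of_nonneg_of_le_pi
          · linarith [hy.1]
          · rw [Set.mem_Ico] at hy; linarith [hy.2])
    have := key ⟨hx1, le_refl x⟩
    have h7 : ⟪m θc, uperp θc⟫ ≤ ⟪m x, uperp θc⟫ := by linarith
    calc t α θc = ⟪m θc, uperp θc⟫ := (mid_lev hchord hα θc).symm
      _ ≤ ⟪m x, uperp θc⟫ := h7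
  -- monotonicity to the left: on [θc - π, θc], values dominate the value at θc
  have hdown : ∀ θc x, θc - Real.pi ≤ x → x ≤ θc → t α θc ≤ ⟪m x, uperp θc⟫ := by
    intro θc x hx1 hx2
    have key := image_le_of_deriv_right_le_deriv_boundary
        (f := fun y => ⟪m y, uperp θc⟫) (a := x) (b := θc)
        (f' := fun y => vr α y * Real.sin (y - θc))
        (B := fun _ => ⟪m x, uperp θc⟫) (B' := fun _ => 0)
        ((hcont.inner continuous_const).continuousOn)
        (fun y _ => g_deriv hvr hα θc y)
        (le_refl _)
        continuousOn_const
        (fun y _ => hasDerivWithinAt_const _ _ _)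
        (by
          intro y hy
          have h8 : Real.sin (y - θc) ≤ 0 := by
            apply Real.sin_nonpos_of_nonpos_of_neg_pi_le
            · rw [Set.mem_Ico] at hy; linarith [hy.2]
            · rw [Set.mem_Ico] at hy; linarith [hy.1]
          have h9 := mul_nonneg (hV y) (neg_nonneg.2 h8)
          show vr α y * Real.sin (y - θc) ≤ (0:ℝ)
          nlinarith [h9])
    have := key ⟨hx2, le_refl θc⟩
    calc t α θc = ⟪m θc, uperp θc⟫ := (mid_lev hchord hα θc).symm
      _ ≤ ⟪m x, uperp θc⟫ := this
  rw [mem_core]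
  intro θ
  -- replace θ by a representative within distance π of θ₀
  set k : ℤ := round ((θ₀ - θ) / (2 * Real.pi)) with hk
  set θ' := θ + k * (2 * Real.pi) with hθ'
  have hud : uperp θ' = uperp θ := uperp_add_int_two_pi θ k
  have htd : t α θ' = t α θ :=
    t_congr hK_compact hK_conv hK_int ht hα hud
  have hdist : |θ₀ - θ'| ≤ Real.pi := by
    have h1 : |(θ₀ - θ) / (2 * Real.pi) - k| ≤ 1/2 := abs_sub_round _
    have h2 : θ₀ - θ' = ((θ₀ - θ) / (2 * Real.pi) - k) * (2 * Real.pi) := by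
      rw [hθ']; field_simp; ring
    rw [h2, abs_mul, abs_of_pos (by positivity : (0:ℝ) < 2 * Real.pi)]
    calc |(θ₀ - θ) / (2 * Real.pi) - ↑k| * (2 * Real.pi) ≤ (1/2) * (2 * Real.pi) :=
          mul_le_mul_of_nonneg_right h1 (by positivity)
      _ = Real.pi := by ring
  rw [← htd, ← hud]
  rw [abs_le] at hdist
  rcases le_total θ' θ₀ with hcase | hcase
  · exact hup θ' θ₀ hcase (by linarith [hdist.2])
  · exact hdown θ' θ₀ (by linarith [hdist.1]) hcase

end MM

lemma hasDerivAt_uperp (θ : ℝ) : HasDerivAt uperp (-uvec θ) θ := by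
  have e0 : E2 := EuclideanSpace.single 0 (1:ℝ)
  set v0 : E2 := EuclideanSpace.single 0 (1:ℝ) with hv0
  set v1 : E2 := EuclideanSpace.single 1 (1:ℝ) with hv1
  have hrep : uperp = fun φ => (-Real.sin φ) • v0 + (Real.cos φ) • v1 := by
    funext φ
    apply ext2
    · simp [hv0, hv1, uperp, EuclideanSpace.single_apply]
    · simp [hv0, hv1, uperp, EuclideanSpace.single_apply]
  have hder : HasDerivAt (fun φ => (-Real.sin φ) • v0 + (Real.cos φ) • v1)
      ((-Real.cos θ) • v0 + (-Real.sin θ) • v1) θ := by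
    apply HasDerivAt.add
    · exact HasDerivAt.smul_const ((Real.hasDerivAt_sin θ).neg) v0
    · exact HasDerivAt.smul_const (Real.hasDerivAt_cos θ) v1
  have hvec : (-Real.cos θ) • v0 + (-Real.sin θ) • v1 = -uvec θ := by
    apply ext2
    · simp [hv0, hv1, uvec, EuclideanSpace.single_apply]
    · simp [hv0, hv1, uvec, EuclideanSpace.single_apply]
  rw [hrep]
  rw [← hvec]
  exact hder

section Sym
variable {K : Set E2} {t : ℝ → ℝ → ℝ} {b c : ℝ → ℝ → E2} {vl vr : ℝ → ℝ → ℝ}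
variable (hchord : ∀ α ∈ Set.Ioo (0:ℝ) 1, ∀ θ : ℝ,
      K ∩ {x | ⟪x, uperp θ⟫ = t α θ} = segment ℝ (b α θ) (c α θ))
variable (hvr : ∀ α ∈ Set.Ioo (0:ℝ) 1, ∀ θ₀ : ℝ,
      HasDerivWithinAt (fun θ => (2⁻¹ : ℝ) • (b α θ + c α θ))
        (vr α θ₀ • uvec θ₀) (Set.Ici θ₀) θ₀)

include hchord hvr in
/-- derivative trick: if all bisecting lines pass through ω then all midpoints equal ω,
hence K is symmetric about ω. -/
lemma sym_of_mid (ω : E2) (hmid : ∀ θ, t 2⁻¹ θ = ⟪ω, uperp θ⟫) :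
    ∀ x ∈ K, (2:ℝ) • ω - x ∈ K := by
  have hhalf : (2⁻¹ : ℝ) ∈ Set.Ioo (0:ℝ) 1 := by norm_num
  set m : ℝ → E2 := fun θ => (2⁻¹ : ℝ) • (b 2⁻¹ θ + c 2⁻¹ θ) with hm
  -- all midpoints are ω
  have hmω : ∀ θ₀, m θ₀ = ω := by
    intro θ₀
    set n : ℝ → ℝ := fun θ => ⟪m θ - ω, uperp θ⟫ with hn
    have hn0 : n = fun _ => (0:ℝ) := by
      funext θ
      rw [hn]
      simp only [inner_sub_left]
      rw [mid_lev hchord hhalf θ, hmid θ]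
      ring
    have hd1 : HasDerivWithinAt n
        (⟪m θ₀ - ω, -uvec θ₀⟫ + ⟪vr 2⁻¹ θ₀ • uvec θ₀, uperp θ₀⟫) (Set.Ici θ₀) θ₀ := by
      apply HasDerivWithinAt.inner ℝ
      · exact (hvr 2⁻¹ hhalf θ₀).sub_const ω
      · exact (hasDerivAt_uperp θ₀).hasDerivWithinAt
    have hd2 : HasDerivWithinAt n 0 (Set.Ici θ₀) θ₀ := by
      rw [hn0]
      exact hasDerivWithinAt_const _ _ _
    have huniq : UniqueDiffWithinAt ℝ (Set.Ici θ₀) θ₀ :=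
      uniqueDiffOn_Ici θ₀ θ₀ Set.self_mem_Ici
    have heq : ⟪m θ₀ - ω, -uvec θ₀⟫ + ⟪vr 2⁻¹ θ₀ • uvec θ₀, uperp θ₀⟫ = 0 := by
      rw [← hd1.derivWithin huniq, hd2.derivWithin huniq]
    have hsin : ⟪vr 2⁻¹ θ₀ • uvec θ₀, uperp θ₀⟫ = 0 := by
      rw [real_inner_smul_left, inner_uvec_uperp, sub_self, Real.sin_zero, mul_zero]
    rw [hsin, add_zero, inner_neg_right, neg_eq_zero] at heq
    have hperp0 : ⟪m θ₀ - ω, uperp θ₀⟫ = 0 := by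
      have := congrFun hn0 θ₀
      rwa [hn] at this
    have := eq_zero_of_inner heq hperp0
    have h2 : m θ₀ - ω = 0 := this
    rw [sub_eq_zero] at h2
    exact h2
  -- symmetry
  intro x hx
  by_cases hxω : x = ω
  · rw [hxω]
    have : (2:ℝ) • ω - ω = ω := by
      rw [two_smul]; abel
    rw [this]
    rw [← hxω]
    exact hx
  -- find θ with uperp θ ⟂ (x - ω)
  · set d := x - ω with hd
    have hdne : d ≠ 0 := fun h => hxω (by rwa [hd, sub_eq_zero] at h)
    set w : E2 := WithLp.toLp 2 ![-(d 1), d 0] with hw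
    have hw0 : w 0 = -(d 1) := rfl
    have hw1 : w 1 = d 0 := rfl
    have hwne : w ≠ 0 := by
      intro h
      apply hdne
      apply ext2
      · have := congrArg (fun z : E2 => z 1) h
        rw [hw1] at this
        exact this
      · have := congrArg (fun z : E2 => z 0) h
        rw [hw0] at this
        simpa using (neg_eq_zero.1 this)
    have hnw : 0 < ‖w‖ := norm_pos_iff.2 hwne
    have hdw : ⟪d, w⟫ = 0 := by
      simp [PiLp.inner_apply, Fin.sum_univ_two, hw0, hw1]
      ring
    set u := ‖w‖⁻¹ • w with hu
    have hun : ‖u‖ = 1 := by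
      rw [hu, norm_smul, norm_inv, norm_norm, inv_mul_cancel₀ (ne_of_gt hnw)]
    obtain ⟨θ, hθ⟩ := exists_uperp_eq u hun
    have hlev : ⟪x, uperp θ⟫ = t 2⁻¹ θ := by
      have h3 : ⟪d, uperp θ⟫ = 0 := by
        rw [hθ, hu, real_inner_smul_right, hdw, mul_zero]
      rw [hmid θ]
      have h4 : ⟪x, uperp θ⟫ - ⟪ω, uperp θ⟫ = 0 := by
        rw [← inner_sub_left]; exact h3
      linarith
    have hxseg : x ∈ segment ℝ (b 2⁻¹ θ) (c 2⁻¹ θ) := by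
      rw [← hchord 2⁻¹ hhalf θ]
      exact ⟨hx, hlev⟩
    rw [segment_eq_image] at hxseg
    obtain ⟨τ, hτ, hτx⟩ := hxseg
    have hmθ := hmω θ
    rw [hm] at hmθ
    have h2ω : b 2⁻¹ θ + c 2⁻¹ θ = (2:ℝ) • ω := by
      have h5 := congrArg (fun y : E2 => (2:ℝ) • y) hmθ
      simpa [smul_smul] using h5
    have hmem : (2:ℝ) • ω - x ∈ segment ℝ (b 2⁻¹ θ) (c 2⁻¹ θ) := by
      rw [segment_eq_image]
      refine ⟨1 - τ, ⟨by linarith [hτ.2], by linarith [hτ.1]⟩, ?_⟩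
      show (1 - (1-τ)) • b 2⁻¹ θ + (1-τ) • c 2⁻¹ θ = (2:ℝ) • ω - x
      rw [← h2ω, ← hτx]
      show (1 - (1-τ)) • b 2⁻¹ θ + (1-τ) • c 2⁻¹ θ
          = (b 2⁻¹ θ + c 2⁻¹ θ) - ((1-τ) • b 2⁻¹ θ + τ • c 2⁻¹ θ)
      module
    have := hchord 2⁻¹ hhalf θ
    rw [← this] at hmem
    exact hmem.1

end Sym

end St18

open St18

/-- If `K` is not centrally symmetric then there is `α ∈ (0,1/2)` for which the backwards set
`B(α)` is nonempty while the α-core still has nonempty interior (i.e. `α_B < α_K`). -/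
theorem statement18
    (K : Set (EuclideanSpace ℝ (Fin 2)))
    (hK_compact : IsCompact K) (hK_conv : Convex ℝ K) (hK_int : (interior K).Nonempty)
    (t : ℝ → ℝ → ℝ)
    (ht : ∀ α ∈ Set.Ioo (0:ℝ) 1, ∀ θ : ℝ,
      volume (K ∩ {x | ⟪x, uperp θ⟫ ≤ t α θ}) = ENNReal.ofReal α * volume K)
    (b c : ℝ → ℝ → EuclideanSpace ℝ (Fin 2))
    (hchord : ∀ α ∈ Set.Ioo (0:ℝ) 1, ∀ θ : ℝ,
      K ∩ {x | ⟪x, uperp θ⟫ = t α θ} = segment ℝ (b α θ) (c α θ))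
    (hbc_ne : ∀ α ∈ Set.Ioo (0:ℝ) 1, ∀ θ : ℝ, b α θ ≠ c α θ)
    (horient : ∀ α ∈ Set.Ioo (0:ℝ) 1, ∀ θ : ℝ, 0 ≤ ⟪c α θ - b α θ, uvec θ⟫)
    -- `vl α θ₀` and `vr α θ₀` are the one-sided velocities of the midpoint curve
    (vl vr : ℝ → ℝ → ℝ)
    (hvl : ∀ α ∈ Set.Ioo (0:ℝ) 1, ∀ θ₀ : ℝ,
      HasDerivWithinAt (fun θ => (2⁻¹ : ℝ) • (b α θ + c α θ))
        (vl α θ₀ • uvec θ₀) (Set.Iic θ₀) θ₀)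
    (hvr : ∀ α ∈ Set.Ioo (0:ℝ) 1, ∀ θ₀ : ℝ,
      HasDerivWithinAt (fun θ => (2⁻¹ : ℝ) • (b α θ + c α θ))
        (vr α θ₀ • uvec θ₀) (Set.Ici θ₀) θ₀)
    (hnotsym : ¬ ∃ ω : EuclideanSpace ℝ (Fin 2), ∀ x ∈ K, (2:ℝ) • ω - x ∈ K) :
    ∃ α : ℝ, α ∈ Set.Ioo (0:ℝ) (1/2) ∧
      {θ : ℝ | (Set.uIcc (vl α θ) (vr α θ) ∩ Set.Iio (0:ℝ)).Nonempty}.Nonempty ∧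
      (interior (⋂ θ : ℝ,
        {x : EuclideanSpace ℝ (Fin 2) | t α θ ≤ ⟪x, uperp θ⟫})).Nonempty := by
  by_contra hcon
  push_neg at hcon
  have hπ := Real.pi_pos
  -- velocities are nonnegative whenever the core has interior
  have hv : ∀ α, α ∈ Set.Ioo (0:ℝ) (1/2) → (interior (core t α)).Nonempty →
      ∀ θ, 0 ≤ vr α θ := by
    intro α hα hint θ
    by_contra hneg
    push_neg at hneg
    have hN1 : {θ : ℝ | (Set.uIcc (vl α θ) (vr α θ) ∩ Set.Iio (0:ℝ)).Nonempty}.Nonempty :=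
      ⟨θ, ⟨vr α θ, Set.right_mem_uIcc, Set.mem_Iio.2 hneg⟩⟩
    have hint' : (interior (⋂ θ : ℝ,
        {x : EuclideanSpace ℝ (Fin 2) | t α θ ≤ ⟪x, uperp θ⟫})).Nonempty := hint
    rw [hcon α hα hN1] at hint'
    simp at hint'
  classical
  set A := {α : ℝ | α ∈ Set.Ioo (0:ℝ) (1/2) ∧ (interior (core t α)).Nonempty} with hA
  obtain ⟨α₁, hα₁, x₀, r₀, hr₀, hball₀⟩ := core_small hK_compact hK_int ht
  have hα₁A : α₁ ∈ A :=
    ⟨hα₁, ⟨x₀, interior_maximal hball₀ Metric.isOpen_ball (Metric.mem_ball_self hr₀)⟩⟩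
  have hAne : A.Nonempty := ⟨α₁, hα₁A⟩
  have hAbdd : BddAbove A := ⟨1/2, fun β hβ => le_of_lt hβ.1.2⟩
  set αs := sSup A with hαs
  have hαs_pos : 0 < αs := lt_of_lt_of_le hα₁.1 (le_csSup hAbdd hα₁A)
  have hαs_half : αs ≤ 1/2 := csSup_le hAne fun β hβ => le_of_lt hβ.1.2
  have hαsIoo : αs ∈ Set.Ioo (0:ℝ) 1 := ⟨hαs_pos, by linarith⟩
  have hIoo_of_half : ∀ β : ℝ, β ∈ Set.Ioo (0:ℝ) (1/2) → β ∈ Set.Ioo (0:ℝ) 1 := by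
    intro β hβ
    exact ⟨hβ.1, by linarith [hβ.2]⟩
  have hdown : ∀ β, 0 < β → β < αs → β ∈ A := by
    intro β hβ0 hβs
    obtain ⟨γ, hγA, hγgt⟩ := exists_lt_of_lt_csSup hAne hβs
    have hβIoo : β ∈ Set.Ioo (0:ℝ) (1/2) := ⟨hβ0, lt_trans hγgt hγA.1.2⟩
    refine ⟨hβIoo, ?_⟩
    have hsub : core t γ ⊆ core t β :=
      core_mono hK_compact hK_int ht (hIoo_of_half β hβIoo) (hIoo_of_half γ hγA.1)
        (le_of_lt hγgt)
    exact hγA.2.mono (interior_mono hsub)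
  -- the approximating sequence
  set g : ℕ → ℝ := fun n => αs * (((n:ℝ)+1) / ((n:ℝ)+2)) with hg
  have hfrac_pos : ∀ n : ℕ, 0 < ((n:ℝ)+1) / ((n:ℝ)+2) := by
    intro n; positivity
  have hfrac_lt : ∀ n : ℕ, ((n:ℝ)+1) / ((n:ℝ)+2) < 1 := by
    intro n
    rw [div_lt_one (by positivity)]
    linarith
  have hglt : ∀ n, g n < αs := by
    intro n
    calc g n < αs * 1 := by
          rw [hg]
          exact mul_lt_mul_of_pos_left (hfrac_lt n) hαs_pos
      _ = αs := mul_one _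
  have hgpos : ∀ n, 0 < g n := fun n => mul_pos hαs_pos (hfrac_pos n)
  have hgA : ∀ n, g n ∈ A := fun n => hdown (g n) (hgpos n) (hglt n)
  have hgIoo : ∀ n, g n ∈ Set.Ioo (0:ℝ) 1 := fun n => hIoo_of_half _ (hgA n).1
  have hgmono : StrictMono g := by
    intro m n hmn
    rw [hg]
    apply mul_lt_mul_of_pos_left _ hαs_pos
    rw [div_lt_div_iff₀ (by positivity) (by positivity)]
    have : (m:ℝ) < n := by exact_mod_cast hmn
    nlinarith
  have hglim : Tendsto g atTop (𝓝 αs) := by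
    have h1 : Tendsto (fun n : ℕ => ((n:ℝ)+1) / ((n:ℝ)+2)) atTop (𝓝 1) := by
      have h2 := (tendsto_natCast_div_add_atTop (1:ℝ)).comp (tendsto_add_atTop_nat 1)
      have h3 : (fun n : ℕ => ((n:ℝ)+1) / ((n:ℝ)+2)) =
          (fun n : ℕ => (n:ℝ) / ((n:ℝ) + 1)) ∘ (fun n => n + 1) := by
        funext n
        simp only [Function.comp_apply]
        push_cast
        ring_nf
      rw [h3]
      exact h2
    have h4 : Tendsto (fun n : ℕ => αs * (((n:ℝ)+1) / ((n:ℝ)+2))) atTop (𝓝 (αs * 1)) :=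
      h1.const_mul αs
    rw [mul_one] at h4
    exact h4
  -- midpoints of the g n sections are in the cores
  have hmids : ∀ n θ, (2⁻¹ : ℝ) • (b (g n) θ + c (g n) θ) ∈ core t (g n) := by
    intro n θ
    exact mid_mem_core hK_compact hK_conv hK_int ht hchord hvl hvr (hgIoo n)
      (hv (g n) (hgA n).1 (hgA n).2) θ
  -- C1: every αs-section line meets the αs-core
  have hC1 : ∀ θ, ∃ x ∈ core t αs, ⟪x, uperp θ⟫ = t αs θ := by
    intro θ
    set xseq : ℕ → E2 := fun n => (2⁻¹ : ℝ) • (b (g n) θ + c (g n) θ) with hxseq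
    have hxK : ∀ n, xseq n ∈ K := fun n =>
      core_subset_K hK_compact hK_conv hK_int ht (hgIoo n) (hmids n θ)
    obtain ⟨x, hxKmem, φ, hφmono, hφtend⟩ := hK_compact.tendsto_subseq hxK
    have hinner_tend : ∀ θ', Tendsto (fun k => ⟪xseq (φ k), uperp θ'⟫) atTop
        (𝓝 (⟪x, uperp θ'⟫)) := by
      intro θ'
      exact ((cont_inner_uperp θ').tendsto x).comp hφtend
    have ht_tend : ∀ θ', Tendsto (fun k => t (g (φ k)) θ') atTop (𝓝 (t αs θ')) := by
      intro θ'
      exact (t_tendsto hK_compact hK_conv hK_int ht hgIoo hgmono hαsIoo hglim θ').comp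
        (hφmono.tendsto_atTop)
    refine ⟨x, ?_, ?_⟩
    · rw [mem_core]
      intro θ'
      apply le_of_tendsto_of_tendsto' (ht_tend θ') (hinner_tend θ')
      intro k
      exact mem_core.1 (hmids (φ k) θ) θ'
    · have heqs : ∀ k, ⟪xseq (φ k), uperp θ⟫ = t (g (φ k)) θ := fun k =>
        mid_lev hchord (hgIoo (φ k)) θ
      exact tendsto_nhds_unique ((hinner_tend θ).congr heqs) (ht_tend θ)
  have h1mαs : (1 - αs) ∈ Set.Ioo (0:ℝ) 1 := ⟨by linarith, by linarith⟩
  -- the flip bound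
  have hupper : ∀ θ, ∀ y ∈ core t αs, ⟪y, uperp θ⟫ ≤ t (1 - αs) θ := by
    intro θ y hy
    have h1 : t αs (θ + Real.pi) ≤ ⟪y, uperp (θ + Real.pi)⟫ := mem_core.1 hy _
    rw [uperp_add_pi, inner_neg_right] at h1
    have h2 : t (1 - αs) θ = - t αs (θ + Real.pi) :=
      t_flip hK_compact hK_conv hK_int ht hαsIoo θ
    linarith
  have hattain : ∀ θ, ∃ y ∈ core t αs, ⟪y, uperp θ⟫ = t (1-αs) θ := by
    intro θ
    obtain ⟨y, hy, hyl⟩ := hC1 (θ + Real.pi)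
    refine ⟨y, hy, ?_⟩
    rw [uperp_add_pi, inner_neg_right] at hyl
    have h2 : t (1 - αs) θ = - t αs (θ + Real.pi) :=
      t_flip hK_compact hK_conv hK_int ht hαsIoo θ
    linarith
  -- αs must equal 1/2
  have hhalfeq : αs = 1/2 := by
    by_contra hne
    have hlt : αs < 1/2 := lt_of_le_of_ne hαs_half hne
    -- interior of core t αs is empty
    have hint_empty : ¬ (interior (core t αs)).Nonempty := by
      intro hint
      obtain ⟨z, hz⟩ := hint
      obtain ⟨ρ, hρ, hball⟩ := Metric.isOpen_iff.1 isOpen_interior z hz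
      have hball' : Metric.ball z ρ ⊆ core t αs := hball.trans interior_subset
      obtain ⟨ε, hε, hexp⟩ := core_expand hK_compact hK_conv hK_int ht hαsIoo hρ hball'
      set β := min (αs + ε) ((αs + 1/2)/2) with hβ
      have hβ1 : αs < β := lt_min (by linarith) (by linarith)
      have hβhalf : β < 1/2 := lt_of_le_of_lt (min_le_right _ _) (by linarith)
      have hβIoo : β ∈ Set.Ioo (0:ℝ) 1 := ⟨by linarith, by linarith⟩
      have hβint := hexp β hβIoo hβ1 (min_le_left _ _)
      have hβA : β ∈ A := ⟨⟨by linarith, hβhalf⟩, hβint⟩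
      exact absurd (le_csSup hAbdd hβA) (not_le.2 hβ1)
    -- the core is contained in a line
    have hSconv : Convex ℝ (core t αs) := by
      apply convex_iInter
      intro θ
      exact convex_halfSpace_ge
        ⟨fun x y => inner_add_left x y (uperp θ), fun r x => real_inner_smul_left x (uperp θ) r⟩
        (t αs θ)
    obtain ⟨x00, hx00, _⟩ := hC1 0
    have hSne : (core t αs).Nonempty := ⟨x00, hx00⟩
    have hspan : affineSpan ℝ (core t αs) ≠ ⊤ := by
      intro h
      exact hint_empty ((hSconv.interior_nonempty_iff_affineSpan_eq_top).2 h)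
    set W := (affineSpan ℝ (core t αs)).direction with hW
    have hWne : W ≠ ⊤ := by
      intro h
      apply hspan
      have hspanne : ((affineSpan ℝ (core t αs) : AffineSubspace ℝ E2) : Set E2).Nonempty :=
        ⟨x00, subset_affineSpan ℝ _ hx00⟩
      exact (AffineSubspace.direction_eq_top_iff_of_nonempty hspanne).1 h
    have hWo : Wᗮ ≠ ⊥ := fun h => hWne (Submodule.orthogonal_eq_bot_iff.1 h)
    obtain ⟨v, hvW, hvne⟩ := (Submodule.ne_bot_iff _).1 hWo
    have hnv : 0 < ‖v‖ := norm_pos_iff.2 hvne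
    have hun : ‖(‖v‖⁻¹ • v : E2)‖ = 1 := by
      rw [norm_smul, norm_inv, norm_norm, inv_mul_cancel₀ (ne_of_gt hnv)]
    obtain ⟨θd, hθd⟩ := exists_uperp_eq (‖v‖⁻¹ • v) hun
    obtain ⟨x1, hx1S, hx1l⟩ := hC1 θd
    obtain ⟨y1, hy1S, hy1l⟩ := hattain θd
    have hsub : x1 - y1 ∈ W := by
      have := AffineSubspace.vsub_mem_direction (subset_affineSpan ℝ _ hx1S)
        (subset_affineSpan ℝ _ hy1S)
      rwa [vsub_eq_sub] at this
    have h0 : ⟪x1 - y1, uperp θd⟫ = 0 := by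
      rw [hθd, real_inner_smul_right]
      have h5 : ⟪x1 - y1, v⟫ = 0 := by
        exact (Submodule.mem_orthogonal W v).1 hvW (x1 - y1) hsub
      rw [h5, mul_zero]
    rw [inner_sub_left, hx1l, hy1l] at h0
    have h9 : t αs θd = t (1-αs) θd := by linarith
    -- measure contradiction
    have hFα : F K θd (t αs θd) = ENNReal.ofReal αs * volume K := tF ht hαsIoo θd
    have hFβ : F K θd (t (1-αs) θd) = ENNReal.ofReal (1-αs) * volume K := tF ht h1mαs θd
    rw [← h9, hFα] at hFβ
    have h10 : ENNReal.ofReal αs = ENNReal.ofReal (1-αs) :=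
      (ENNReal.mul_left_inj (ne_of_gt (muK_pos hK_int))
        (ne_of_lt (muK_fin hK_compact))).1 hFβ
    have h11 : αs = 1 - αs := by
      rw [ENNReal.ofReal_eq_ofReal_iff (by linarith) (by linarith)] at h10
      exact h10
    linarith
  -- conclude symmetry
  obtain ⟨ω, hωS, _⟩ := hC1 0
  have hmid : ∀ θ, t 2⁻¹ θ = ⟪ω, uperp θ⟫ := by
    intro θ
    have h1 : t αs θ ≤ ⟪ω, uperp θ⟫ := mem_core.1 hωS θ
    have h2 : ⟪ω, uperp θ⟫ ≤ t (1-αs) θ := hupper θ ω hωS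
    have h3 : (1:ℝ) - αs = αs := by rw [hhalfeq]; norm_num
    rw [h3] at h2
    have h4 : (2⁻¹ : ℝ) = αs := by rw [hhalfeq]; norm_num
    rw [h4]
    linarith
  exact hnotsym ⟨ω, sym_of_mid hchord hvr ω hmid⟩
end
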